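/- arXiv:1803.05397 — 7 statements merged into one kernel-verified Lean document; each statement's English description precedes it below -/
import Mathlib

section
/- Let {A_t}_{t≥0} be an arbitrary sequence of subsets of {1,…,m} with |A_t| ≥ ηm for all t, and suppose S satisfies the BRIP condition with parameters (η, ε) where ε < 1/7. Suppose λh is differentiable and L-smooth, and let the iterates be generated by encoded gradient descent w_{t+1} = w_t − α ∇f̃^{A_t}(w_t) with a constant step size α satisfying 0 < α ≤ 1/(M+L). Then for every t ≥ 1, (1/t)·Σ_{τ=1}^t f(w_τ) − ((1+3ε)/(1−7ε))·f(w*) ≤ (4ε f(w_0) + (1/(2α))‖w_0 − w*‖²) / ((1−7ε) t). -/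
/-!
For an active set `B` satisfying BRIP, the encoded objective `f̃^B` lies between `(1 - ε) f` and
`(1 + ε) f`, is convex, and is `((1 + ε) M + L)`-smooth. The classical one-step estimate of gradient
descent for a convex smooth function therefore applies to `f̃^{A_t}` at step `t`; translating back
to `f` with the sandwich turns it into
`(1 - ε) ‖w_{t+1} - w*‖² ≤ (1 - ε) ‖w_t - w*‖² + 2αε(1 + ε) f(w_t) + 2α(1 - ε²) f(w*)
  - 2α(1 - ε) f(w_{t+1})`,
which telescopes over `t`. The terms `ε f(w_τ)` are absorbed on the left since `ε < 1/7`.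
-/

open Matrix Finset

noncomputable section

namespace Stmt0

/-- The original objective `f(w) = (1/2)‖Xw − y‖² + λ h(w)`. -/
def objF {n p : ℕ} (X : Matrix (Fin n) (Fin p) ℝ) (y : Fin n → ℝ) (lam : ℝ)
    (h : (Fin p → ℝ) → ℝ) (w : Fin p → ℝ) : ℝ :=
  (1 / 2) * ((X *ᵥ w - y) ⬝ᵥ (X *ᵥ w - y)) + lam * h w

/-- `‖S_A z‖² = ∑_{i ∈ A} ‖S_i z‖²`, the quadratic form of `S_Aᵀ S_A`. -/
def encSq {n r m : ℕ} (S : Fin m → Matrix (Fin r) (Fin n) ℝ) (A : Finset (Fin m))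
    (z : Fin n → ℝ) : ℝ :=
  ∑ i ∈ A, (S i *ᵥ z) ⬝ᵥ (S i *ᵥ z)

/-- Gradient of the encoded objective
`f̃^A(w) = (1/2)‖S_A (Xw − y)‖² + λ h(w)`, namely
`Xᵀ S_Aᵀ S_A (Xw − y) + λ ∇h(w)`. -/
def gradTilde {n p r m : ℕ} (X : Matrix (Fin n) (Fin p) ℝ) (y : Fin n → ℝ)
    (S : Fin m → Matrix (Fin r) (Fin n) ℝ) (lam : ℝ)
    (hgrad : (Fin p → ℝ) → (Fin p → ℝ)) (A : Finset (Fin m)) (w : Fin p → ℝ) :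
    Fin p → ℝ :=
  Xᵀ *ᵥ (∑ i ∈ A, (S i)ᵀ *ᵥ (S i *ᵥ (X *ᵥ w - y))) + lam • hgrad w

section DotProduct

variable {ι : Type*} [Fintype ι]

lemma dotProduct_self_nonneg (v : ι → ℝ) : 0 ≤ v ⬝ᵥ v :=
  Fintype.sum_nonneg fun i => mul_self_nonneg (v i)

lemma dotProduct_sub_smul_self (u g : ι → ℝ) (a : ℝ) :
    (u - a • g) ⬝ᵥ (u - a • g) = u ⬝ᵥ u - 2 * a * (g ⬝ᵥ u) + a ^ 2 * (g ⬝ᵥ g) := by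
  simp only [sub_dotProduct, dotProduct_sub, smul_dotProduct, dotProduct_smul, smul_eq_mul,
    dotProduct_comm u g]
  ring

lemma mul_dotProduct_self_nonneg_of_convex_of_smooth {R : (ι → ℝ) → ℝ} {G : (ι → ℝ) → ι → ℝ}
    {L : ℝ} (hconv : ∀ a b, R a + G a ⬝ᵥ (b - a) ≤ R b)
    (hsmooth : ∀ a b, R b ≤ R a + G a ⬝ᵥ (b - a) + L / 2 * ((b - a) ⬝ᵥ (b - a)))
    (d : ι → ℝ) : 0 ≤ L * (d ⬝ᵥ d) := by
  have := hconv 0 d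
  have := hsmooth 0 d
  rw [sub_zero] at *
  linarith

lemma apply_sub_smul_le_of_smooth {F : (ι → ℝ) → ℝ} {u g : ι → ℝ} {α K c : ℝ} (hα : 0 ≤ α)
    (hsmooth : ∀ v, F v ≤ F u + g ⬝ᵥ (v - u) + K / 2 * ((v - u) ⬝ᵥ (v - u)))
    (hK : α * K * (g ⬝ᵥ g) ≤ (2 - c) * (g ⬝ᵥ g)) :
    F (u - α • g) ≤ F u - α * c / 2 * (g ⬝ᵥ g) := by
  have key := hsmooth (u - α • g)
  rw [sub_sub_cancel_left, dotProduct_neg, neg_dotProduct, dotProduct_neg, neg_neg,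
    dotProduct_smul, smul_dotProduct, dotProduct_smul, smul_eq_mul, smul_eq_mul] at key
  nlinarith [mul_le_mul_of_nonneg_left hK hα]

/-- In `‖u - α g - z‖²`, convexity bounds the cross term and sufficient decrease the term
`α² ‖g‖²`. -/
lemma dist_sub_smul_le {F : (ι → ℝ) → ℝ} {u z g : ι → ℝ} {α c : ℝ} (hα : 0 ≤ α) (hc : 0 ≤ c)
    (hconv : F u + g ⬝ᵥ (z - u) ≤ F z)
    (hdesc : F (u - α • g) ≤ F u - α * c / 2 * (g ⬝ᵥ g)) :
    c * ((u - α • g - z) ⬝ᵥ (u - α • g - z)) ≤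
      c * ((u - z) ⬝ᵥ (u - z)) + 2 * α * (1 - c) * F u + 2 * α * c * F z
        - 2 * α * F (u - α • g) := by
  have hinner : g ⬝ᵥ (z - u) = -(g ⬝ᵥ (u - z)) := by rw [← dotProduct_neg, neg_sub]
  rw [hinner] at hconv
  rw [sub_right_comm, dotProduct_sub_smul_self]
  nlinarith [mul_le_mul_of_nonneg_left hconv (mul_nonneg hα hc),
    mul_le_mul_of_nonneg_left hdesc hα]

end DotProduct

section Encoded

variable {n p r m : ℕ} (X : Matrix (Fin n) (Fin p) ℝ) (y : Fin n → ℝ)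
  (S : Fin m → Matrix (Fin r) (Fin n) ℝ) (lam : ℝ) (h : (Fin p → ℝ) → ℝ)
  (hgrad : (Fin p → ℝ) → (Fin p → ℝ)) (B : Finset (Fin m))

def encObj (v : Fin p → ℝ) : ℝ :=
  (1 / 2) * encSq S B (X *ᵥ v - y) + lam * h v

lemma objF_nonneg (v : Fin p → ℝ) (hv : 0 ≤ lam * h v) : 0 ≤ objF X y lam h v :=
  add_nonneg (mul_nonneg (by norm_num) (dotProduct_self_nonneg _)) hv

lemma encSq_nonneg (z : Fin n → ℝ) : 0 ≤ encSq S B z :=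
  sum_nonneg fun _ _ => dotProduct_self_nonneg _

lemma encSq_add (z d : Fin n → ℝ) :
    encSq S B (z + d) = encSq S B z + 2 * ∑ i ∈ B, (S i *ᵥ z) ⬝ᵥ (S i *ᵥ d) + encSq S B d := by
  simp only [encSq, mul_sum, ← sum_add_distrib]
  refine sum_congr rfl fun i _ => ?_
  rw [mulVec_add, add_dotProduct, dotProduct_add, dotProduct_add, dotProduct_comm (S i *ᵥ d)]
  ring

lemma gradTilde_dotProduct (u d : Fin p → ℝ) :
    gradTilde X y S lam hgrad B u ⬝ᵥ d =
      ∑ i ∈ B, (S i *ᵥ (X *ᵥ u - y)) ⬝ᵥ (S i *ᵥ (X *ᵥ d)) + (lam • hgrad u) ⬝ᵥ d := by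
  simp only [gradTilde, add_dotProduct, mulVec_transpose, ← dotProduct_mulVec, sum_dotProduct]

lemma encObj_eq_add_remainder (u v : Fin p → ℝ) :
    encObj X y S lam h B v = encObj X y S lam h B u + gradTilde X y S lam hgrad B u ⬝ᵥ (v - u)
      + (1 / 2) * encSq S B (X *ᵥ (v - u))
      + (lam * h v - lam * h u - (lam • hgrad u) ⬝ᵥ (v - u)) := by
  have hsplit : X *ᵥ v - y = (X *ᵥ u - y) + X *ᵥ (v - u) := by rw [mulVec_sub]; abel
  rw [encObj, encObj, hsplit, encSq_add, gradTilde_dotProduct]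
  ring

lemma encObj_convex (hconv : ∀ a b, lam * h a + (lam • hgrad a) ⬝ᵥ (b - a) ≤ lam * h b)
    (u v : Fin p → ℝ) :
    encObj X y S lam h B u + gradTilde X y S lam hgrad B u ⬝ᵥ (v - u) ≤
      encObj X y S lam h B v := by
  rw [encObj_eq_add_remainder X y S lam h hgrad B u v]
  linarith [encSq_nonneg S B (X *ᵥ (v - u)), hconv u v]

variable {ε : ℝ}

lemma encObj_smooth {L M : ℝ} (hB : ∀ z, encSq S B z ≤ (1 + ε) * (z ⬝ᵥ z)) (hε : 0 ≤ 1 + ε)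
    (hM : ∀ v : Fin p → ℝ, (X *ᵥ v) ⬝ᵥ (X *ᵥ v) ≤ M * (v ⬝ᵥ v))
    (hsmooth : ∀ a b, lam * h b ≤ lam * h a + (lam • hgrad a) ⬝ᵥ (b - a) +
      L / 2 * ((b - a) ⬝ᵥ (b - a)))
    (u v : Fin p → ℝ) :
    encObj X y S lam h B v ≤ encObj X y S lam h B u + gradTilde X y S lam hgrad B u ⬝ᵥ (v - u)
      + ((1 + ε) * M + L) / 2 * ((v - u) ⬝ᵥ (v - u)) := by
  rw [encObj_eq_add_remainder X y S lam h hgrad B u v]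
  nlinarith [hB (X *ᵥ (v - u)), mul_le_mul_of_nonneg_left (hM (v - u)) hε, hsmooth u v]

lemma encObj_sandwich
    (hB : ∀ z, (1 - ε) * (z ⬝ᵥ z) ≤ encSq S B z ∧ encSq S B z ≤ (1 + ε) * (z ⬝ᵥ z))
    (hε : 0 ≤ ε) (v : Fin p → ℝ) (hv : 0 ≤ lam * h v) :
    (1 - ε) * objF X y lam h v ≤ encObj X y S lam h B v ∧
      encObj X y S lam h B v ≤ (1 + ε) * objF X y lam h v := by
  obtain ⟨hlo, hhi⟩ := hB (X *ᵥ v - y)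
  have := mul_nonneg hε hv
  constructor <;> · rw [encObj, objF]; linarith

lemma dist_encoded_step_le {L M α : ℝ} {u u' z : Fin p → ℝ}
    (hB : ∀ z, (1 - ε) * (z ⬝ᵥ z) ≤ encSq S B z ∧ encSq S B z ≤ (1 + ε) * (z ⬝ᵥ z))
    (hε0 : 0 ≤ ε) (hε1 : ε ≤ 1)
    (hM : ∀ v : Fin p → ℝ, (X *ᵥ v) ⬝ᵥ (X *ᵥ v) ≤ M * (v ⬝ᵥ v))
    (hR : ∀ v, 0 ≤ lam * h v)
    (hconv : ∀ a b, lam * h a + (lam • hgrad a) ⬝ᵥ (b - a) ≤ lam * h b)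
    (hsmooth : ∀ a b, lam * h b ≤ lam * h a + (lam • hgrad a) ⬝ᵥ (b - a) +
      L / 2 * ((b - a) ⬝ᵥ (b - a)))
    (hα : 0 ≤ α) (hαML : α * (M + L) ≤ 1) (hu' : u' = u - α • gradTilde X y S lam hgrad B u) :
    (1 - ε) * ((u' - z) ⬝ᵥ (u' - z)) ≤
      (1 - ε) * ((u - z) ⬝ᵥ (u - z)) + 2 * α * ε * (1 + ε) * objF X y lam h u
        + 2 * α * (1 - ε) * (1 + ε) * objF X y lam h z
        - 2 * α * (1 - ε) * objF X y lam h u' := by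
  set g := gradTilde X y S lam hgrad B u
  have hg := dotProduct_self_nonneg g
  have hLg := mul_dotProduct_self_nonneg_of_convex_of_smooth hconv hsmooth g
  -- The encoded objective is `((1 + ε) M + L)`-smooth, so the step `α ≤ 1 / (M + L)` is
  -- slightly too long for it; this costs the factor `1 - ε` in the decrease.
  have hK : α * ((1 + ε) * M + L) * (g ⬝ᵥ g) ≤ (2 - (1 - ε)) * (g ⬝ᵥ g) := by
    nlinarith [mul_nonneg (sub_nonneg.mpr hαML) (mul_nonneg (by linarith : (0 : ℝ) ≤ 1 + ε) hg),
      mul_nonneg (mul_nonneg hε0 hα) hLg]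
  have hdesc := apply_sub_smul_le_of_smooth hα
    (encObj_smooth X y S lam h hgrad B (fun z => (hB z).2) (by linarith) hM hsmooth u) hK
  have hdist := dist_sub_smul_le (z := z) hα (by linarith)
    (encObj_convex X y S lam h hgrad B hconv u z) hdesc
  rw [← hu'] at hdist
  obtain ⟨-, hu⟩ := encObj_sandwich X y S lam h B hB hε0 u (hR u)
  obtain ⟨-, hz⟩ := encObj_sandwich X y S lam h B hB hε0 z (hR z)
  obtain ⟨hnext, -⟩ := encObj_sandwich X y S lam h B hB hε0 u' (hR u')
  have hαε : 0 ≤ 2 * α * ε := by positivity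
  have hα1ε : 0 ≤ 2 * α * (1 - ε) := mul_nonneg (by positivity) (by linarith)
  linarith [mul_le_mul_of_nonneg_left hu hαε, mul_le_mul_of_nonneg_left hz hα1ε,
    mul_le_mul_of_nonneg_left hnext (by positivity : (0 : ℝ) ≤ 2 * α)]

end Encoded

lemma sum_Icc_le_of_step {D f : ℕ → ℝ} {a b d : ℝ}
    (hstep : ∀ t, D (t + 1) ≤ D t + a * f t + b - d * f (t + 1)) (T : ℕ) :
    D T + d * ∑ τ ∈ Icc 1 T, f τ ≤ D 0 + a * ∑ τ ∈ range T, f τ + T * b := by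
  induction T with
  | zero => simp
  | succ k ih =>
    rw [sum_Icc_succ_top (by omega), sum_range_succ]
    push_cast
    linarith [hstep k]

lemma sum_range_le_add_sum_Icc {f : ℕ → ℝ} (hf : ∀ t, 0 ≤ f t) (T : ℕ) :
    ∑ τ ∈ range T, f τ ≤ f 0 + ∑ τ ∈ Icc 1 T, f τ := by
  have hsplit : ∑ τ ∈ range (T + 1), f τ = f 0 + ∑ τ ∈ Icc 1 T, f τ := by
    rw [range_eq_Ico, sum_eq_sum_Ico_succ_bot (by omega), Ico_add_one_right_eq_Icc]
  linarith [sum_range_succ f T, hf T]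

lemma average_sub_le_of_sum_le {ε α T Sg F0 Fs D0 : ℝ} (hε0 : 0 ≤ ε) (hε : ε < 1 / 7)
    (hα : 0 < α) (hT : 0 < T) (hF0 : 0 ≤ F0) (hFs : 0 ≤ Fs) (hD0 : 0 ≤ D0)
    (hsum : 2 * α * (1 - ε) * Sg ≤
      (1 - ε) * D0 + 2 * α * ε * (1 + ε) * (F0 + Sg) + T * (2 * α * (1 - ε) * (1 + ε) * Fs)) :
    (1 / T) * Sg - ((1 + 3 * ε) / (1 - 7 * ε)) * Fs ≤
      (4 * ε * F0 + (1 / (2 * α)) * D0) / ((1 - 7 * ε) * T) := by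
  have h7 : 0 < 1 - 7 * ε := by linarith
  have hq : 0 < 1 - 2 * ε - ε ^ 2 := by nlinarith
  set D := (1 / (2 * α)) * D0 with hD
  have hDnn : 0 ≤ D := by positivity
  have hD0_eq : D0 = 2 * α * D := by rw [hD]; field_simp
  have hsum' : (1 - 2 * ε - ε ^ 2) * Sg ≤
      (1 - ε) * D + ε * (1 + ε) * F0 + (1 - ε ^ 2) * T * Fs := by
    rw [hD0_eq] at hsum
    nlinarith
  -- After scaling by `(1 - 7ε) / (1 - 2ε - ε²)`, each coefficient of `hsum'` is at most the
  -- corresponding one in the claim.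
  have hlin : (1 - 7 * ε) * Sg ≤ (1 + 3 * ε) * T * Fs + 4 * ε * F0 + D := by
    refine le_of_mul_le_mul_left ?_ hq
    nlinarith [mul_le_mul_of_nonneg_left hsum' h7.le,
      mul_nonneg (by nlinarith : (0 : ℝ) ≤ 8 * ε - 6 * ε ^ 2 - 10 * ε ^ 3) (mul_nonneg hT.le hFs),
      mul_nonneg (by nlinarith : (0 : ℝ) ≤ 3 * ε - 2 * ε ^ 2 + 3 * ε ^ 3) hF0,
      mul_nonneg (by nlinarith : (0 : ℝ) ≤ 6 * ε - 8 * ε ^ 2) hDnn]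
  have hlhs : ((1 / T) * Sg - ((1 + 3 * ε) / (1 - 7 * ε)) * Fs) * ((1 - 7 * ε) * T) =
      (1 - 7 * ε) * Sg - (1 + 3 * ε) * T * Fs := by
    calc _ = (1 / T * T) * ((1 - 7 * ε) * Sg)
          - ((1 + 3 * ε) / (1 - 7 * ε) * (1 - 7 * ε)) * (T * Fs) := by ring
      _ = _ := by rw [one_div_mul_cancel hT.ne', div_mul_cancel₀ _ h7.ne']; ring
  rw [le_div_iff₀ (mul_pos h7 hT), hlhs]
  linarith

theorem encoded_gradient_descent_convex_general
    {n p r m : ℕ}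
    (X : Matrix (Fin n) (Fin p) ℝ) (y : Fin n → ℝ)
    (S : Fin m → Matrix (Fin r) (Fin n) ℝ)
    (η ε lam L M α : ℝ)
    (h : (Fin p → ℝ) → ℝ) (hgrad : (Fin p → ℝ) → (Fin p → ℝ))
    (A : ℕ → Finset (Fin m)) (w : ℕ → Fin p → ℝ) (wstar : Fin p → ℝ)
    -- BRIP parameters
    (hε0 : 0 < ε) (hε : ε < 1 / 7)
    -- BRIP condition: (1−ε)I ⪯ S_Aᵀ S_A ⪯ (1+ε)I for all |A| ≥ ηm
    (hBRIP : ∀ B : Finset (Fin m), η * m ≤ (B.card : ℝ) →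
      ∀ z : Fin n → ℝ,
        (1 - ε) * (z ⬝ᵥ z) ≤ encSq S B z ∧ encSq S B z ≤ (1 + ε) * (z ⬝ᵥ z))
    -- every active set is sufficiently large
    (hA : ∀ t, η * m ≤ (((A t).card : ℕ) : ℝ))
    -- M is (an upper bound for) the largest eigenvalue of XᵀX
    (hM : ∀ v : Fin p → ℝ, (X *ᵥ v) ⬝ᵥ (X *ᵥ v) ≤ M * (v ⬝ᵥ v))
    -- h is convex and nonnegative, λ ≥ 0
    (hlam : 0 ≤ lam) (hh : ∀ v, 0 ≤ h v)
    -- λh is (differentiable and) convex with gradient λ ∇h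
    (hconv : ∀ a b : Fin p → ℝ,
      lam * h a + (lam • hgrad a) ⬝ᵥ (b - a) ≤ lam * h b)
    -- λh is L-smooth
    (hsmooth : ∀ a b : Fin p → ℝ,
      lam * h b ≤ lam * h a + (lam • hgrad a) ⬝ᵥ (b - a) +
        L / 2 * ((b - a) ⬝ᵥ (b - a)))
    -- constant step size 0 < α ≤ 1/(M+L)
    (hα0 : 0 < α) (hα : α ≤ 1 / (M + L))
    -- encoded gradient descent iterates
    (hiter : ∀ t, w (t + 1) = w t - α • gradTilde X y S lam hgrad (A t) (w t)) :
    ∀ t : ℕ, 1 ≤ t →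
      (1 / (t : ℝ)) * (∑ τ ∈ Finset.Icc 1 t, objF X y lam h (w τ)) -
          ((1 + 3 * ε) / (1 - 7 * ε)) * objF X y lam h wstar ≤
        (4 * ε * objF X y lam h (w 0) +
            (1 / (2 * α)) * ((w 0 - wstar) ⬝ᵥ (w 0 - wstar))) /
          ((1 - 7 * ε) * (t : ℝ)) := by
  intro t ht
  have hR : ∀ v, 0 ≤ lam * h v := fun v => mul_nonneg hlam (hh v)
  have hF : ∀ v, 0 ≤ objF X y lam h v := fun v => objF_nonneg X y lam h v (hR v)
  have hML : 0 < M + L := by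
    by_contra! hML
    linarith [one_div_nonpos.mpr hML]
  have hαML : α * (M + L) ≤ 1 := (le_div_iff₀ hML).mp hα
  have hsum := sum_Icc_le_of_step (D := fun t => (1 - ε) * ((w t - wstar) ⬝ᵥ (w t - wstar)))
    (f := fun t => objF X y lam h (w t))
    (fun t => dist_encoded_step_le X y S lam h hgrad (A t) (hBRIP _ (hA t)) hε0.le (by linarith)
      hM hR hconv hsmooth hα0.le hαML (hiter t)) t
  have hrange := sum_range_le_add_sum_Icc (fun t => hF (w t)) t
  have hdist_nonneg :=
    mul_nonneg (by linarith : (0 : ℝ) ≤ 1 - ε) (dotProduct_self_nonneg (w t - wstar))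
  refine average_sub_le_of_sum_le hε0.le hε hα0 (by exact_mod_cast ht) (hF _) (hF _)
    (dotProduct_self_nonneg _) ?_
  linarith [mul_le_mul_of_nonneg_left hrange (by positivity : (0 : ℝ) ≤ 2 * α * ε * (1 + ε))]

/-- encoded gradient descent, convex case, Theorem 1(1). -/
theorem encoded_gradient_descent_convex
    {n p r m : ℕ}
    (X : Matrix (Fin n) (Fin p) ℝ) (y : Fin n → ℝ)
    (S : Fin m → Matrix (Fin r) (Fin n) ℝ)
    (η ε lam L M α : ℝ)
    (h : (Fin p → ℝ) → ℝ) (hgrad : (Fin p → ℝ) → (Fin p → ℝ))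
    (A : ℕ → Finset (Fin m)) (w : ℕ → Fin p → ℝ) (wstar : Fin p → ℝ)
    -- BRIP parameters
    (hη0 : 0 < η) (hη1 : η ≤ 1) (hε0 : 0 < ε) (hε : ε < 1 / 7)
    -- BRIP condition: (1−ε)I ⪯ S_Aᵀ S_A ⪯ (1+ε)I for all |A| ≥ ηm
    (hBRIP : ∀ B : Finset (Fin m), η * m ≤ (B.card : ℝ) →
      ∀ z : Fin n → ℝ,
        (1 - ε) * (z ⬝ᵥ z) ≤ encSq S B z ∧ encSq S B z ≤ (1 + ε) * (z ⬝ᵥ z))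
    -- every active set is sufficiently large
    (hA : ∀ t, η * m ≤ (((A t).card : ℕ) : ℝ))
    -- M is (an upper bound for) the largest eigenvalue of XᵀX
    (hM : ∀ v : Fin p → ℝ, (X *ᵥ v) ⬝ᵥ (X *ᵥ v) ≤ M * (v ⬝ᵥ v))
    -- h is convex and nonnegative, λ ≥ 0
    (hlam : 0 ≤ lam) (hh : ∀ v, 0 ≤ h v)
    -- λh is (differentiable and) convex with gradient λ ∇h
    (hconv : ∀ a b : Fin p → ℝ,
      lam * h a + (lam • hgrad a) ⬝ᵥ (b - a) ≤ lam * h b)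
    -- λh is L-smooth
    (hsmooth : ∀ a b : Fin p → ℝ,
      lam * h b ≤ lam * h a + (lam • hgrad a) ⬝ᵥ (b - a) +
        L / 2 * ((b - a) ⬝ᵥ (b - a)))
    -- constant step size 0 < α ≤ 1/(M+L)
    (hα0 : 0 < α) (hα : α ≤ 1 / (M + L))
    -- encoded gradient descent iterates
    (hiter : ∀ t, w (t + 1) = w t - α • gradTilde X y S lam hgrad (A t) (w t))
    -- w* is a minimizer of f
    (hwstar : ∀ v, objF X y lam h wstar ≤ objF X y lam h v) :
    ∀ t : ℕ, 1 ≤ t →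
      (1 / (t : ℝ)) * (∑ τ ∈ Finset.Icc 1 t, objF X y lam h (w τ)) -
          ((1 + 3 * ε) / (1 - 7 * ε)) * objF X y lam h wstar ≤
        (4 * ε * objF X y lam h (w 0) +
            (1 / (2 * α)) * ((w 0 - wstar) ⬝ᵥ (w 0 - wstar))) /
          ((1 - 7 * ε) * (t : ℝ)) :=
  encoded_gradient_descent_convex_general X y S η ε lam L M α h hgrad A w wstar hε0 hε hBRIP hA hM
    hlam hh hconv hsmooth hα0 hα hiter

end Stmt0
end
end

section
/- Fix σ ∈ ℕ (the L-BFGS memory length), constants δ > 0, ε ≥ 0, and 0 < μ ≤ M with μI ⪯ X^⊤X ⪯ MI. Let {w_t}_{t≥0} ⊂ ℝ^p be any sequence with u_t := w_t − w_{t−1} ≠ 0 for all t ≥ 1, and suppose that for each t ≥ 1 there is a symmetric matrix P_t with δI ⪯ P_t ⪯ (1+ε)I such that r_t := X^⊤ P_t X u_t. For each t ≥ 1 define σ̃ = min{t, σ}, ρ_j = 1/(r_j^⊤ u_j), V_j = I − ρ_j r_j u_j^⊤, B_t^{(0)} = ((r_t^⊤ r_t)/(r_t^⊤ u_t)) I,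 the recursion B_t^{(ℓ+1)} = V_{j_ℓ}^⊤ B_t^{(ℓ)} V_{j_ℓ} + ρ_{j_ℓ} u_{j_ℓ} u_{j_ℓ}^⊤ with j_ℓ = t − σ̃ + ℓ + 1 for ℓ = 0, …, σ̃−1, and B_t := B_t^{(σ̃)}. Then there exist constants c_2 ≥ c_1 > 0, depending only on δ, ε, μ, M, σ, and p (and not on t or the sequence {w_t}), such that c_1 I ⪯ B_t ⪯ c_2 I for all t ≥ 1. -/
/-!
With `θ = (u ⬝ᵥ z) / (r ⬝ᵥ u)`, the update `B⁺ = Vᵀ B V + ρ u uᵀ` has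
`z ⬝ᵥ B⁺ z = y ⬝ᵥ B y + (u ⬝ᵥ z)² / (r ⬝ᵥ u)` where `y = V z = z - θ r`. Because `r = G u` with
`δμ I ⪯ G = Xᵀ P X ⪯ (1+ε)M I`, every correction pair satisfies `r ⬝ᵥ u ≥ δμ ‖u‖²` and
`‖r‖² ≤ (1+ε)M (r ⬝ᵥ u)` (the latter from `G² ⪯ (1+ε)M G`). These bound both `‖θ r‖²` and the
rank-one term by multiples of `‖z‖²`, so one update moves the bounds `L I ⪯ B ⪯ U I` to bounds
depending only on `L`, `U`, `δμ` and `(1+ε)M`. Starting from the scaled identity, at most `σ`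
updates give bounds independent of `t`.
-/

open Matrix Finset

noncomputable section

namespace Stmt2

/-- `u_t = w_t − w_{t−1}`. -/
def uvec {p : ℕ} (w : ℕ → Fin p → ℝ) (t : ℕ) : Fin p → ℝ :=
  w t - w (t - 1)

/-- `r_t = Xᵀ P_t X u_t`. -/
def rvec {n p : ℕ} (X : Matrix (Fin n) (Fin p) ℝ)
    (P : ℕ → Matrix (Fin n) (Fin n) ℝ) (w : ℕ → Fin p → ℝ) (t : ℕ) :
    Fin p → ℝ :=
  Xᵀ *ᵥ (P t *ᵥ (X *ᵥ uvec w t))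

/-- `ρ_j = 1/(r_jᵀ u_j)`. -/
def rho {n p : ℕ} (X : Matrix (Fin n) (Fin p) ℝ)
    (P : ℕ → Matrix (Fin n) (Fin n) ℝ) (w : ℕ → Fin p → ℝ) (j : ℕ) : ℝ :=
  1 / (rvec X P w j ⬝ᵥ uvec w j)

/-- `V_j = I − ρ_j r_j u_jᵀ`. -/
def Vmat {n p : ℕ} (X : Matrix (Fin n) (Fin p) ℝ)
    (P : ℕ → Matrix (Fin n) (Fin n) ℝ) (w : ℕ → Fin p → ℝ) (j : ℕ) :
    Matrix (Fin p) (Fin p) ℝ :=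
  1 - rho X P w j • vecMulVec (rvec X P w j) (uvec w j)

variable {ι : Type*} [Fintype ι]

theorem dotProduct_self_nonneg (v : ι → ℝ) : 0 ≤ v ⬝ᵥ v := by
  simpa using dotProduct_star_self_nonneg v

theorem dotProduct_self_pos {v : ι → ℝ} (hv : v ≠ 0) : 0 < v ⬝ᵥ v := by
  simpa using dotProduct_star_self_pos_iff.2 hv

theorem dotProduct_sq_le (u v : ι → ℝ) : (u ⬝ᵥ v) ^ 2 ≤ (u ⬝ᵥ u) * (v ⬝ᵥ v) := by
  simpa only [dotProduct, sq] using Finset.sum_mul_sq_le_sq_mul_sq Finset.univ u v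

theorem add_dotProduct_add_self_le (x y : ι → ℝ) :
    (x + y) ⬝ᵥ (x + y) ≤ 2 * (x ⬝ᵥ x) + 2 * (y ⬝ᵥ y) := by
  have := dotProduct_self_nonneg (x - y)
  simp only [add_dotProduct, dotProduct_add, sub_dotProduct, dotProduct_sub,
    dotProduct_comm y x] at this ⊢
  linarith

theorem sub_dotProduct_sub_self_le (x y : ι → ℝ) :
    (x - y) ⬝ᵥ (x - y) ≤ 2 * (x ⬝ᵥ x) + 2 * (y ⬝ᵥ y) := by
  have := dotProduct_self_nonneg (x + y)
  simp only [add_dotProduct, dotProduct_add, sub_dotProduct, dotProduct_sub,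
    dotProduct_comm y x] at this ⊢
  linarith

theorem mulVec_dotProduct_mulVec_le {G : Matrix ι ι ℝ} {κ : ℝ} (hG : G.IsSymm)
    (hG₀ : ∀ x, 0 ≤ x ⬝ᵥ (G *ᵥ x)) (hGκ : ∀ x, x ⬝ᵥ (G *ᵥ x) ≤ κ * (x ⬝ᵥ x)) (x : ι → ℝ) :
    (G *ᵥ x) ⬝ᵥ (G *ᵥ x) ≤ κ * (x ⬝ᵥ (G *ᵥ x)) := by
  classical
  set y := G *ᵥ x
  have hxy : x ⬝ᵥ (G *ᵥ y) = y ⬝ᵥ y := by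
    rw [dotProduct_mulVec, ← mulVec_transpose, hG.eq]
  -- Cauchy–Schwarz for the form `G`, at `x` and `y = G x`
  have hCS : (y ⬝ᵥ y) * (y ⬝ᵥ y) ≤ (x ⬝ᵥ (G *ᵥ x)) * (κ * (y ⬝ᵥ y)) := by
    have := (Matrix.toBilin' G).apply_mul_apply_le_of_forall_zero_le
      (by simpa only [toBilin'_apply'] using hG₀) x y
    simp only [toBilin'_apply', hxy] at this
    exact this.trans (mul_le_mul_of_nonneg_left (hGκ y) (hG₀ x))
  rcases (dotProduct_self_nonneg y).eq_or_lt with hy | hy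
  · simp [dotProduct_self_eq_zero.1 hy.symm]
  · exact le_of_mul_le_mul_right (by linarith) hy

structure IsCurvaturePair (a κ : ℝ) (r u : ι → ℝ) : Prop where
  ne_zero : u ≠ 0
  le_dotProduct : a * (u ⬝ᵥ u) ≤ r ⬝ᵥ u
  dotProduct_self_le : r ⬝ᵥ r ≤ κ * (r ⬝ᵥ u)

theorem isCurvaturePair_mulVec {G : Matrix ι ι ℝ} {a κ : ℝ} (ha : 0 < a) (hG : G.IsSymm)
    (hGa : ∀ x, a * (x ⬝ᵥ x) ≤ x ⬝ᵥ (G *ᵥ x)) (hGκ : ∀ x, x ⬝ᵥ (G *ᵥ x) ≤ κ * (x ⬝ᵥ x))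
    {u : ι → ℝ} (hu : u ≠ 0) : IsCurvaturePair a κ (G *ᵥ u) u := by
  have hG₀ (x : ι → ℝ) : 0 ≤ x ⬝ᵥ (G *ᵥ x) :=
    (mul_nonneg ha.le (dotProduct_self_nonneg x)).trans (hGa x)
  refine ⟨hu, ?_, ?_⟩ <;> rw [dotProduct_comm (G *ᵥ u) u]
  exacts [hGa u, mulVec_dotProduct_mulVec_le hG hG₀ hGκ u]

theorem isCurvaturePair_transpose_mulVec {m : Type*} [Fintype m] {X : Matrix m ι ℝ}
    {Q : Matrix m m ℝ} {δ ν μ M : ℝ} (hδ : 0 < δ) (hμ : 0 < μ) (hν : 0 ≤ ν)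
    (hXμ : ∀ v, μ * (v ⬝ᵥ v) ≤ (X *ᵥ v) ⬝ᵥ (X *ᵥ v))
    (hXM : ∀ v, (X *ᵥ v) ⬝ᵥ (X *ᵥ v) ≤ M * (v ⬝ᵥ v)) (hQ : Q.IsSymm)
    (hQδ : ∀ y, δ * (y ⬝ᵥ y) ≤ y ⬝ᵥ (Q *ᵥ y)) (hQν : ∀ y, y ⬝ᵥ (Q *ᵥ y) ≤ ν * (y ⬝ᵥ y))
    {u : ι → ℝ} (hu : u ≠ 0) :
    IsCurvaturePair (δ * μ) (ν * M) (Xᵀ *ᵥ (Q *ᵥ (X *ᵥ u))) u := by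
  have hG (x : ι → ℝ) : x ⬝ᵥ ((Xᵀ * Q * X) *ᵥ x) = (X *ᵥ x) ⬝ᵥ (Q *ᵥ (X *ᵥ x)) := by
    rw [← mulVec_mulVec, ← mulVec_mulVec, dotProduct_mulVec, vecMul_transpose]
  rw [mulVec_mulVec, mulVec_mulVec]
  refine isCurvaturePair_mulVec (mul_pos hδ hμ) ?_ (fun x => ?_) (fun x => ?_) hu
  · simp [Matrix.IsSymm, Matrix.transpose_mul, hQ.eq, Matrix.mul_assoc]
  · rw [hG, mul_assoc]
    exact (mul_le_mul_of_nonneg_left (hXμ x) hδ.le).trans (hQδ _)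
  · rw [hG, mul_assoc]
    exact (hQν _).trans (mul_le_mul_of_nonneg_left (hXM x) hν)

namespace IsCurvaturePair

variable {a κ : ℝ} {r u : ι → ℝ}

theorem dotProduct_pos (h : IsCurvaturePair a κ r u) (ha : 0 < a) : 0 < r ⬝ᵥ u :=
  (mul_pos ha (dotProduct_self_pos h.ne_zero)).trans_le h.le_dotProduct

theorem nonneg (h : IsCurvaturePair a κ r u) (ha : 0 < a) : 0 ≤ κ :=
  nonneg_of_mul_nonneg_left ((dotProduct_self_nonneg r).trans h.dotProduct_self_le)
    (h.dotProduct_pos ha)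

theorem le_div (h : IsCurvaturePair a κ r u) (ha : 0 < a) : a ≤ (r ⬝ᵥ r) / (r ⬝ᵥ u) := by
  have hru := h.dotProduct_pos ha
  have huu := dotProduct_self_pos h.ne_zero
  rw [le_div_iff₀ hru]
  refine le_of_mul_le_mul_right ?_ huu
  nlinarith [dotProduct_sq_le r u, h.le_dotProduct]

theorem div_le (h : IsCurvaturePair a κ r u) (ha : 0 < a) : (r ⬝ᵥ r) / (r ⬝ᵥ u) ≤ κ :=
  (div_le_iff₀ (h.dotProduct_pos ha)).2 h.dotProduct_self_le

theorem sq_div_le (h : IsCurvaturePair a κ r u) (ha : 0 < a) (z : ι → ℝ) :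
    (u ⬝ᵥ z) ^ 2 / (r ⬝ᵥ u) ≤ (z ⬝ᵥ z) / a := by
  rw [div_le_div_iff₀ (h.dotProduct_pos ha) ha]
  nlinarith [dotProduct_sq_le u z, h.le_dotProduct, dotProduct_self_nonneg z]

theorem smul_dotProduct_smul_le (h : IsCurvaturePair a κ r u) (θ : ℝ) :
    (θ • r) ⬝ᵥ (θ • r) ≤ κ * (θ ^ 2 * (r ⬝ᵥ u)) := by
  simp only [smul_dotProduct, dotProduct_smul, smul_eq_mul]
  nlinarith [h.dotProduct_self_le, sq_nonneg θ]

end IsCurvaturePair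

variable [DecidableEq ι]

def bfgsUpdate (B : Matrix ι ι ℝ) (r u : ι → ℝ) : Matrix ι ι ℝ :=
  (1 - (1 / (r ⬝ᵥ u)) • vecMulVec r u)ᵀ * B * (1 - (1 / (r ⬝ᵥ u)) • vecMulVec r u) +
    (1 / (r ⬝ᵥ u)) • vecMulVec u u

theorem dotProduct_bfgsUpdate_mulVec (B : Matrix ι ι ℝ) (r u z : ι → ℝ) :
    z ⬝ᵥ (bfgsUpdate B r u *ᵥ z) =
      (z - ((u ⬝ᵥ z) / (r ⬝ᵥ u)) • r) ⬝ᵥ (B *ᵥ (z - ((u ⬝ᵥ z) / (r ⬝ᵥ u)) • r)) +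
        (u ⬝ᵥ z) ^ 2 / (r ⬝ᵥ u) := by
  have hV : (1 - (1 / (r ⬝ᵥ u)) • vecMulVec r u) *ᵥ z = z - ((u ⬝ᵥ z) / (r ⬝ᵥ u)) • r := by
    rw [sub_mulVec, one_mulVec, smul_mulVec, vecMulVec_mulVec, op_smul_eq_smul, smul_smul,
      one_div_mul_eq_div]
  rw [bfgsUpdate, add_mulVec, dotProduct_add, ← mulVec_mulVec, ← mulVec_mulVec,
    dotProduct_mulVec, vecMul_transpose, hV, smul_mulVec, vecMulVec_mulVec, op_smul_eq_smul,
    dotProduct_smul, dotProduct_smul, dotProduct_comm z u, smul_eq_mul, smul_eq_mul]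
  ring

namespace IsCurvaturePair

variable {a κ : ℝ} {r u : ι → ℝ} {B : Matrix ι ι ℝ}

theorem le_dotProduct_bfgsUpdate_mulVec (h : IsCurvaturePair a κ r u) (ha : 0 < a) {L : ℝ}
    (hL : 0 ≤ L) (hB : ∀ x, L * (x ⬝ᵥ x) ≤ x ⬝ᵥ (B *ᵥ x)) (z : ι → ℝ) :
    min (L / 2) (1 / (2 * κ)) * (z ⬝ᵥ z) ≤ z ⬝ᵥ (bfgsUpdate B r u *ᵥ z) := by
  set θ := (u ⬝ᵥ z) / (r ⬝ᵥ u)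
  set y := z - θ • r
  set q := (u ⬝ᵥ z) ^ 2 / (r ⬝ᵥ u)
  have hru := h.dotProduct_pos ha
  have hκ := h.nonneg ha
  have hq : 0 ≤ q := div_nonneg (sq_nonneg _) hru.le
  have hθq : θ ^ 2 * (r ⬝ᵥ u) = q := by simp only [θ, q]; field_simp
  -- `z = y + θ r` with `‖θ r‖² ≤ κ q`, so both terms of the updated form are needed for `‖z‖²`
  have hz : z ⬝ᵥ z ≤ 2 * (y ⬝ᵥ y) + 2 * (κ * q) := by
    have := add_dotProduct_add_self_le y (θ • r)
    rw [sub_add_cancel] at this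
    linarith [hθq ▸ h.smul_dotProduct_smul_le θ]
  set c := min (L / 2) (1 / (2 * κ))
  have hc : 0 ≤ c := le_min (by positivity) (by positivity)
  have hcL : 2 * c ≤ L := by linarith [min_le_left (L / 2) (1 / (2 * κ))]
  have hcκ : 2 * c * κ ≤ 1 := by
    rcases hκ.eq_or_lt with hκ0 | hκ0
    · simp [← hκ0]
    · have := min_le_right (L / 2) (1 / (2 * κ))
      rw [le_div_iff₀ (by positivity)] at this
      linarith
  rw [dotProduct_bfgsUpdate_mulVec]
  calc c * (z ⬝ᵥ z) ≤ c * (2 * (y ⬝ᵥ y) + 2 * (κ * q)) := mul_le_mul_of_nonneg_left hz hc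
    _ = 2 * c * (y ⬝ᵥ y) + 2 * c * κ * q := by ring
    _ ≤ L * (y ⬝ᵥ y) + q := by
      gcongr
      · exact dotProduct_self_nonneg y
      · exact mul_le_of_le_one_left hq hcκ
    _ ≤ y ⬝ᵥ (B *ᵥ y) + q := by gcongr; exact hB y

theorem dotProduct_bfgsUpdate_mulVec_le (h : IsCurvaturePair a κ r u) (ha : 0 < a) {U : ℝ}
    (hU : 0 ≤ U) (hB : ∀ x, x ⬝ᵥ (B *ᵥ x) ≤ U * (x ⬝ᵥ x)) (z : ι → ℝ) :
    z ⬝ᵥ (bfgsUpdate B r u *ᵥ z) ≤ (2 * U * (1 + κ / a) + 1 / a) * (z ⬝ᵥ z) := by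
  set θ := (u ⬝ᵥ z) / (r ⬝ᵥ u)
  set y := z - θ • r
  set q := (u ⬝ᵥ z) ^ 2 / (r ⬝ᵥ u)
  have hru := h.dotProduct_pos ha
  have hκ := h.nonneg ha
  have hθq : θ ^ 2 * (r ⬝ᵥ u) = q := by simp only [θ, q]; field_simp
  have hq : q ≤ (z ⬝ᵥ z) / a := h.sq_div_le ha z
  have hy : y ⬝ᵥ y ≤ 2 * (1 + κ / a) * (z ⬝ᵥ z) := by
    have h1 := sub_dotProduct_sub_self_le z (θ • r)
    have h2 := hθq ▸ h.smul_dotProduct_smul_le θ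
    have h3 : κ * q ≤ κ / a * (z ⬝ᵥ z) := by
      rw [div_mul_eq_mul_div, mul_div_assoc]; exact mul_le_mul_of_nonneg_left hq hκ
    linarith
  rw [dotProduct_bfgsUpdate_mulVec]
  calc y ⬝ᵥ (B *ᵥ y) + q ≤ U * (2 * (1 + κ / a) * (z ⬝ᵥ z)) + (z ⬝ᵥ z) / a :=
        add_le_add ((hB y).trans (mul_le_mul_of_nonneg_left hy hU)) hq
    _ = (2 * U * (1 + κ / a) + 1 / a) * (z ⬝ᵥ z) := by ring

end IsCurvaturePair

/-- The recursion of `le_dotProduct_bfgsUpdate_mulVec`, started at `a`. -/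
def bfgsLowerBound (a κ : ℝ) : ℕ → ℝ
  | 0 => a
  | ℓ + 1 => min (bfgsLowerBound a κ ℓ / 2) (1 / (2 * κ))

/-- The recursion of `dotProduct_bfgsUpdate_mulVec_le`, started at `κ`. -/
def bfgsUpperBound (a κ : ℝ) : ℕ → ℝ
  | 0 => κ
  | ℓ + 1 => 2 * bfgsUpperBound a κ ℓ * (1 + κ / a) + 1 / a

section Bounds

variable {a κ : ℝ}

theorem bfgsLowerBound_pos (ha : 0 < a) (hκ : 0 < κ) (ℓ : ℕ) : 0 < bfgsLowerBound a κ ℓ := by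
  induction ℓ with
  | zero => exact ha
  | succ ℓ ih => exact lt_min (half_pos ih) (by positivity)

theorem bfgsLowerBound_nonneg (ha : 0 ≤ a) (hκ : 0 ≤ κ) (ℓ : ℕ) : 0 ≤ bfgsLowerBound a κ ℓ := by
  induction ℓ with
  | zero => exact ha
  | succ ℓ ih => exact le_min (by positivity) (by positivity)

theorem bfgsLowerBound_antitone (ha : 0 ≤ a) (hκ : 0 ≤ κ) : Antitone (bfgsLowerBound a κ) :=
  antitone_nat_of_succ_le fun ℓ =>
    (min_le_left _ _).trans (half_le_self (bfgsLowerBound_nonneg ha hκ ℓ))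

theorem bfgsUpperBound_nonneg (ha : 0 ≤ a) (hκ : 0 ≤ κ) (ℓ : ℕ) : 0 ≤ bfgsUpperBound a κ ℓ := by
  induction ℓ with
  | zero => exact hκ
  | succ ℓ ih => simp only [bfgsUpperBound]; positivity

theorem bfgsUpperBound_monotone (ha : 0 ≤ a) (hκ : 0 ≤ κ) : Monotone (bfgsUpperBound a κ) := by
  refine monotone_nat_of_le_succ fun ℓ => ?_
  have hU := bfgsUpperBound_nonneg ha hκ ℓ
  have : 0 ≤ κ / a := by positivity
  simp only [bfgsUpperBound]
  nlinarith [one_div_nonneg.2 ha]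

end Bounds

theorem IsCurvaturePair.bfgs_iterate_bounds {a κ : ℝ} (ha : 0 < a) {r₀ u₀ : ι → ℝ}
    (h₀ : IsCurvaturePair a κ r₀ u₀) {N : ℕ} {r u : ℕ → ι → ℝ} {B : ℕ → Matrix ι ι ℝ}
    (h : ∀ ℓ < N, IsCurvaturePair a κ (r ℓ) (u ℓ))
    (hB₀ : B 0 = ((r₀ ⬝ᵥ r₀) / (r₀ ⬝ᵥ u₀)) • (1 : Matrix ι ι ℝ))
    (hB : ∀ ℓ < N, B (ℓ + 1) = bfgsUpdate (B ℓ) (r ℓ) (u ℓ)) :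
    ∀ ℓ ≤ N, ∀ z, bfgsLowerBound a κ ℓ * (z ⬝ᵥ z) ≤ z ⬝ᵥ (B ℓ *ᵥ z) ∧
      z ⬝ᵥ (B ℓ *ᵥ z) ≤ bfgsUpperBound a κ ℓ * (z ⬝ᵥ z) := by
  have hκ := h₀.nonneg ha
  intro ℓ hℓ
  induction ℓ with
  | zero =>
    intro z
    rw [hB₀, smul_mulVec, one_mulVec, dotProduct_smul, smul_eq_mul]
    exact ⟨mul_le_mul_of_nonneg_right (h₀.le_div ha) (dotProduct_self_nonneg z),
      mul_le_mul_of_nonneg_right (h₀.div_le ha) (dotProduct_self_nonneg z)⟩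
  | succ ℓ ih =>
    have hB' := ih (by omega)
    intro z
    rw [hB ℓ (by omega)]
    exact ⟨(h ℓ (by omega)).le_dotProduct_bfgsUpdate_mulVec ha
        (bfgsLowerBound_nonneg ha.le hκ ℓ) (fun x => (hB' x).1) z,
      (h ℓ (by omega)).dotProduct_bfgsUpdate_mulVec_le ha
        (bfgsUpperBound_nonneg ha.le hκ ℓ) (fun x => (hB' x).2) z⟩

/-- Lemma 1: stability of the multi-batch L-BFGS inverse
Hessian estimates.  The constants `c₁, c₂` depend only on `δ, ε, μ, M, σ, p`
and not on `t`, the data `X`, or the sequence `{w_t}`. -/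
theorem lbfgs_inverse_hessian_bounds
    (p σ : ℕ) (δ ε μ M : ℝ)
    (hδ : 0 < δ) (hε : 0 ≤ ε) (hμ0 : 0 < μ) (hμM : μ ≤ M) :
    ∃ c1 c2 : ℝ, 0 < c1 ∧ c1 ≤ c2 ∧
      ∀ (n : ℕ) (X : Matrix (Fin n) (Fin p) ℝ)
        (w : ℕ → Fin p → ℝ) (P : ℕ → Matrix (Fin n) (Fin n) ℝ)
        (B : ℕ → ℕ → Matrix (Fin p) (Fin p) ℝ),
        -- μ I ⪯ XᵀX ⪯ M I
        (∀ v : Fin p → ℝ, μ * (v ⬝ᵥ v) ≤ (X *ᵥ v) ⬝ᵥ (X *ᵥ v)) →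
        (∀ v : Fin p → ℝ, (X *ᵥ v) ⬝ᵥ (X *ᵥ v) ≤ M * (v ⬝ᵥ v)) →
        -- each P_t is symmetric with δ I ⪯ P_t ⪯ (1+ε) I
        (∀ t, 1 ≤ t → (P t).IsSymm) →
        (∀ t, 1 ≤ t → ∀ z : Fin n → ℝ, δ * (z ⬝ᵥ z) ≤ z ⬝ᵥ (P t *ᵥ z)) →
        (∀ t, 1 ≤ t → ∀ z : Fin n → ℝ, z ⬝ᵥ (P t *ᵥ z) ≤ (1 + ε) * (z ⬝ᵥ z)) →
        -- u_t ≠ 0 for all t ≥ 1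
        (∀ t, 1 ≤ t → uvec w t ≠ 0) →
        -- B_t^{(0)} = ((r_tᵀ r_t)/(r_tᵀ u_t)) I
        (∀ t, 1 ≤ t → B t 0 =
          ((rvec X P w t ⬝ᵥ rvec X P w t) / (rvec X P w t ⬝ᵥ uvec w t)) •
            (1 : Matrix (Fin p) (Fin p) ℝ)) →
        -- B_t^{(ℓ+1)} = V_{j_ℓ}ᵀ B_t^{(ℓ)} V_{j_ℓ} + ρ_{j_ℓ} u_{j_ℓ} u_{j_ℓ}ᵀ,
        -- with j_ℓ = t − min(t,σ) + ℓ + 1 for ℓ = 0, …, min(t,σ) − 1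
        (∀ t, 1 ≤ t → ∀ ℓ, ℓ < min t σ →
          B t (ℓ + 1) =
            (Vmat X P w (t - min t σ + ℓ + 1))ᵀ * B t ℓ *
                Vmat X P w (t - min t σ + ℓ + 1) +
              rho X P w (t - min t σ + ℓ + 1) •
                vecMulVec (uvec w (t - min t σ + ℓ + 1))
                  (uvec w (t - min t σ + ℓ + 1))) →
        -- conclusion: c₁ I ⪯ B_t = B_t^{(min(t,σ))} ⪯ c₂ I for all t ≥ 1
        ∀ t, 1 ≤ t →
          (∀ z : Fin p → ℝ, c1 * (z ⬝ᵥ z) ≤ z ⬝ᵥ (B t (min t σ) *ᵥ z)) ∧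
          (∀ z : Fin p → ℝ, z ⬝ᵥ (B t (min t σ) *ᵥ z) ≤ c2 * (z ⬝ᵥ z)) := by
  have ha : 0 < δ * μ := mul_pos hδ hμ0
  have hκ : 0 < (1 + ε) * M := by have := hμ0.trans_le hμM; positivity
  set L := bfgsLowerBound (δ * μ) ((1 + ε) * M)
  set U := bfgsUpperBound (δ * μ) ((1 + ε) * M)
  refine ⟨L σ, max (U σ) (L σ), bfgsLowerBound_pos ha hκ σ, le_max_right _ _, ?_⟩
  intro n X w P B hXμ hXM hP hPδ hPε hu hB₀ hB t ht
  have hpair (j : ℕ) (hj : 1 ≤ j) :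
      IsCurvaturePair (δ * μ) ((1 + ε) * M) (rvec X P w j) (uvec w j) :=
    isCurvaturePair_transpose_mulVec hδ hμ0 (by linarith) hXμ hXM (hP j hj) (hPδ j hj)
      (hPε j hj) (hu j hj)
  have hbounds := (hpair t ht).bfgs_iterate_bounds ha (N := min t σ)
    (fun ℓ _ => hpair _ (by omega)) (hB₀ t ht) (hB t ht) _ le_rfl
  have hσ : min t σ ≤ σ := min_le_right t σ
  refine ⟨fun z => le_trans ?_ (hbounds z).1, fun z => (hbounds z).2.trans ?_⟩ <;>
    refine mul_le_mul_of_nonneg_right ?_ (dotProduct_self_nonneg z)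
  · exact bfgsLowerBound_antitone ha.le hκ.le hσ
  · exact (bfgsUpperBound_monotone ha.le hκ.le hσ).trans (le_max_left _ _)

end Stmt2
end
end

section
/- Let {A_t}_{t≥0} be an arbitrary sequence of subsets of {1,…,m} with |A_t| ≥ ηm for all t, and let the encoded block coordinate descent iterates {v_t} be given by: v_{t+1} agrees with v_t on every block i ∉ A_t, and v_{t+1,i} = v_{t,i} − α ∇_{v_i} g̃(v_t) for i ∈ A_t, with constant step size 0 < α < 1/(L(1+ε)). Set w_t = S^⊤ v_t. Assume the solution set 𝒮 = argmin g is nonempty and closed, let g* = min g, and assume g is ν-restricted-strongly convex. Then for every t ≥ 0, g(w_t) − g* ≤ (1 − 1/ξ)^t (g(w_0) − g*), where ξ = (1/(ν(1−ε)α)) · (1 − L(1+ε)α/2)^{−1}. -/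
open Matrix Finset

noncomputable section

namespace Stmt7

/-- Decoding map: `w = Sᵀ v = ∑ᵢ Sᵢᵀ vᵢ`, where `v` is stored blockwise. -/
def decode {p r m : ℕ} (S : Fin m → Matrix (Fin r) (Fin p) ℝ)
    (v : Fin m → Fin r → ℝ) : Fin p → ℝ :=
  ∑ i, (S i)ᵀ *ᵥ v i

/-- `‖S_A z‖² = ∑_{i ∈ A} ‖S_i z‖²`, the quadratic form of `S_Aᵀ S_A`. -/
def encSq {p r m : ℕ} (S : Fin m → Matrix (Fin r) (Fin p) ℝ) (A : Finset (Fin m))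
    (z : Fin p → ℝ) : ℝ :=
  ∑ i ∈ A, (S i *ᵥ z) ⬝ᵥ (S i *ᵥ z)

lemma dotSelf_nonneg {n : ℕ} (x : Fin n → ℝ) : 0 ≤ x ⬝ᵥ x :=
  Finset.sum_nonneg fun _ _ => mul_self_nonneg _

lemma cs_dot {n : ℕ} (x y : Fin n → ℝ) : (x ⬝ᵥ y) ^ 2 ≤ (x ⬝ᵥ x) * (y ⬝ᵥ y) := by
  simpa [dotProduct, sq] using Finset.sum_mul_sq_le_sq_mul_sq Finset.univ x y

lemma dot_eq_zero_left {n : ℕ} {x : Fin n → ℝ} (hx : x ⬝ᵥ x ≤ 0) (y : Fin n → ℝ) :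
    x ⬝ᵥ y = 0 := by
  have h0 : x ⬝ᵥ x = 0 := le_antisymm hx (dotSelf_nonneg x)
  have h := cs_dot x y
  rw [h0, zero_mul] at h
  exact pow_eq_zero_iff two_ne_zero |>.mp (le_antisymm h (sq_nonneg _))

lemma dotProduct_finsum {n : ℕ} {ι : Type*} (x : Fin n → ℝ) (s : Finset ι)
    (f : ι → Fin n → ℝ) : x ⬝ᵥ (∑ i ∈ s, f i) = ∑ i ∈ s, x ⬝ᵥ f i := by
  simp only [dotProduct, Finset.sum_apply, Finset.mul_sum]
  rw [Finset.sum_comm]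

lemma cs_blocks {p r m : ℕ} (S : Fin m → Matrix (Fin r) (Fin p) ℝ) (A : Finset (Fin m))
    (x y : Fin p → ℝ) :
    (∑ i ∈ A, (S i *ᵥ x) ⬝ᵥ (S i *ᵥ y)) ^ 2 ≤ encSq S A x * encSq S A y := by
  have h := Finset.sum_mul_sq_le_sq_mul_sq (A ×ˢ (Finset.univ : Finset (Fin r)))
    (fun q => (S q.1 *ᵥ x) q.2) (fun q => (S q.1 *ᵥ y) q.2)
  simpa [encSq, Finset.sum_product, dotProduct, sq] using h


lemma step_combine {L α ε ν Q U H gt gt1 : ℝ}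
    (hL : 0 < L) (hα0 : 0 < α) (hε0 : 0 < ε) (hε1 : ε < 1) (hν : 0 < ν)
    (hαL : L * (1 + ε) * α < 1)
    (hstep : gt1 ≤ gt - α * Q + L / 2 * (α ^ 2 * U))
    (huu : U ≤ (1 + ε) * Q) (hQlow : (1 - ε) * H ≤ Q)
    (hg1 : ν * gt ≤ H) (hgt : 0 ≤ gt) :
    gt1 ≤ (1 - ν * (1 - ε) * α * (1 - L * (1 + ε) * α / 2)) * gt := by
  have hκpos : (0:ℝ) ≤ α - L * (1 + ε) * α ^ 2 / 2 := by nlinarith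
  nlinarith [mul_le_mul_of_nonneg_left huu (by positivity : (0:ℝ) ≤ L / 2 * α ^ 2),
    mul_le_mul_of_nonneg_left hQlow hκpos,
    mul_le_mul_of_nonneg_left hg1 (mul_nonneg (by linarith : (0:ℝ) ≤ 1 - ε) hκpos)]


lemma nu_gt_L {L α ε ν : ℝ} (hL : 0 < L) (hα0 : 0 < α) (hε0 : 0 < ε)
    (hν : 0 < ν) (hαL : L * (1 + ε) * α < 1) (hLα : L * α < 1)
    (h1 : 1 < ν * (1 - ε) * α * (1 - L * (1 + ε) * α / 2)) : L < ν := by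
  have hκ1 : 1 - L * (1 + ε) * α / 2 ≤ 1 := by
    nlinarith [mul_pos (mul_pos hL hα0) hε0, mul_pos hL hα0]
  have p0 : ν * (1 - ε) ≤ ν := by nlinarith [mul_pos hν hε0]
  have p1 : ν * (1 - ε) * α ≤ ν * α := mul_le_mul_of_nonneg_right p0 hα0.le
  have p2 : ν * (1 - ε) * α * (1 - L * (1 + ε) * α / 2) ≤
      ν * α * (1 - L * (1 + ε) * α / 2) :=
    mul_le_mul_of_nonneg_right p1 (by linarith)
  have p3 : ν * α * (1 - L * (1 + ε) * α / 2) ≤ ν * α * 1 :=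
    mul_le_mul_of_nonneg_left hκ1 (mul_pos hν hα0).le
  have hνα : 1 < ν * α := by nlinarith
  have q1 := mul_lt_mul_of_pos_left hνα hL
  have q2 := mul_lt_mul_of_pos_right hLα hν
  nlinarith

lemma descent_G_nonpos {L α ga gb G : ℝ} (hα0 : 0 < α) (hLα : L * α < 1)
    (hs : gb ≤ ga + -α * G + L / 2 * (-α * (-α * G))) (hm : ga ≤ gb) : G ≤ 0 := by
  by_contra hG
  push_neg at hG
  have hαG : 0 < α * G := mul_pos hα0 hG
  nlinarith [mul_pos (by linarith : (0:ℝ) < 1 - L * α) hαG]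


set_option maxHeartbeats 2000000 in
/-- Theorem 4(2): encoded block coordinate descent under
restricted strong convexity. -/
theorem encoded_bcd_restricted_strongly_convex
    {p r m : ℕ}
    (S : Fin m → Matrix (Fin r) (Fin p) ℝ)
    (g : (Fin p → ℝ) → ℝ) (g' : (Fin p → ℝ) → (Fin p → ℝ))
    (proj : (Fin p → ℝ) → (Fin p → ℝ))
    (η ε L α ν : ℝ)
    (A : ℕ → Finset (Fin m)) (v : ℕ → Fin m → Fin r → ℝ) (wmin : Fin p → ℝ)
    -- BRIP parameters
    (hη0 : 0 < η) (hη1 : η ≤ 1) (hε0 : 0 < ε) (hε1 : ε < 1)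
    -- BRIP condition
    (hBRIP : ∀ B : Finset (Fin m), η * m ≤ (B.card : ℝ) →
      ∀ z : Fin p → ℝ,
        (1 - ε) * (z ⬝ᵥ z) ≤ encSq S B z ∧ encSq S B z ≤ (1 + ε) * (z ⬝ᵥ z))
    (hA : ∀ t, η * m ≤ (((A t).card : ℕ) : ℝ))
    -- g is convex and differentiable with gradient g'
    (hconv : ∀ a b : Fin p → ℝ, g a + g' a ⬝ᵥ (b - a) ≤ g b)
    -- g is L-smooth
    (hsmooth : ∀ a b : Fin p → ℝ,
      g b ≤ g a + g' a ⬝ᵥ (b - a) + L / 2 * ((b - a) ⬝ᵥ (b - a)))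
    -- step size 0 < α < 1/(L(1+ε))
    (hα0 : 0 < α) (hα : α < 1 / (L * (1 + ε)))
    -- encoded block coordinate descent iterates
    (hiter : ∀ t, ∀ i : Fin m,
      v (t + 1) i =
        if i ∈ A t then v t i - α • (S i *ᵥ g' (decode S (v t))) else v t i)
    -- the solution set 𝒮 = argmin g is nonempty: wmin is a minimizer
    (hwmin : ∀ u, g wmin ≤ g u)
    -- proj is the Euclidean projection onto 𝒮:
    -- proj x ∈ 𝒮, and proj x is closest to x among all minimizers of g
    (hproj_mem : ∀ x : Fin p → ℝ, ∀ u, g (proj x) ≤ g u)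
    (hproj_close : ∀ x u : Fin p → ℝ, (∀ z, g u ≤ g z) →
      (x - proj x) ⬝ᵥ (x - proj x) ≤ (x - u) ⬝ᵥ (x - u))
    -- g is ν-restricted-strongly convex
    (hν : 0 < ν)
    (hrsc : ∀ x : Fin p → ℝ,
      ν * ((x - proj x) ⬝ᵥ (x - proj x)) ≤ g' x ⬝ᵥ (x - proj x)) :
    ∀ t : ℕ,
      g (decode S (v t)) - g wmin ≤
        (1 - 1 / ((1 / (ν * (1 - ε) * α)) * (1 - L * (1 + ε) * α / 2)⁻¹)) ^ t *
          (g (decode S (v 0)) - g wmin) := by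
  -- basic positivity
  have hLε : 0 < L * (1 + ε) := one_div_pos.mp (lt_trans hα0 hα)
  have hL : 0 < L := by nlinarith
  have hαL : L * (1 + ε) * α < 1 := by
    have := (lt_div_iff₀ hLε).mp hα
    nlinarith
  have hκ' : 1 / 2 < 1 - L * (1 + ε) * α / 2 := by linarith
  have hLα : L * α < 1 := by nlinarith [mul_pos (mul_pos hL hα0) hε0]
  set c : ℝ := 1 - ν * (1 - ε) * α * (1 - L * (1 + ε) * α / 2) with hc
  have hξ : (1 - 1 / ((1 / (ν * (1 - ε) * α)) * (1 - L * (1 + ε) * α / 2)⁻¹)) = c := by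
    have h1 : ν * (1 - ε) * α ≠ 0 :=
      ne_of_gt (mul_pos (mul_pos hν (by linarith)) hα0)
    have h2 : (1 - L * (1 + ε) * α / 2) ≠ 0 := by positivity
    rw [hc]
    field_simp
  rw [hξ]
  set w : ℕ → Fin p → ℝ := fun t => decode S (v t) with hw
  -- gradient lower bound: ν (g x - g*) ≤ ‖g' x‖²
  have hgrad : ∀ x : Fin p → ℝ, ν * (g x - g wmin) ≤ g' x ⬝ᵥ g' x := by
    intro x
    set d : Fin p → ℝ := x - proj x with hd
    have h1 : ν * (d ⬝ᵥ d) ≤ g' x ⬝ᵥ d := hrsc x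
    have h2 : g x - g wmin ≤ g' x ⬝ᵥ d := by
      have hcv := hconv x (proj x)
      have he : g' x ⬝ᵥ (proj x - x) = -(g' x ⬝ᵥ d) := by
        rw [hd, ← dotProduct_neg, neg_sub]
      rw [he] at hcv
      have := hproj_mem x wmin
      linarith
    have hcs := cs_dot (g' x) d
    have hdd : 0 ≤ d ⬝ᵥ d := dotSelf_nonneg d
    have hgg : 0 ≤ g' x ⬝ᵥ g' x := dotSelf_nonneg (g' x)
    rcases le_or_gt (g' x ⬝ᵥ d) 0 with hle | hpos
    · have : g x - g wmin ≤ 0 := le_trans h2 hle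
      nlinarith
    · by_contra hcon
      push_neg at hcon
      have hGP : g' x ⬝ᵥ g' x < ν * (g' x ⬝ᵥ d) := by
        nlinarith [mul_le_mul_of_nonneg_left h2 hν.le]
      have hP2 : (g' x ⬝ᵥ g' x) * (g' x ⬝ᵥ d) < ν * (g' x ⬝ᵥ d) * (g' x ⬝ᵥ d) :=
        mul_lt_mul_of_pos_right hGP hpos
      nlinarith [mul_le_mul_of_nonneg_left hcs hν.le, mul_le_mul_of_nonneg_left h1 hgg]
  -- one-step contraction
  have key : ∀ t, g (w (t + 1)) - g wmin ≤ c * (g (w t) - g wmin) := by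
    intro t
    set hh : Fin p → ℝ := g' (w t) with hhh
    set u : Fin p → ℝ := ∑ i ∈ A t, (S i)ᵀ *ᵥ (S i *ᵥ hh) with hu
    -- iterate identity
    have hw1 : w (t + 1) = w t - α • u := by
      show decode S (v (t + 1)) = decode S (v t) - α • u
      unfold decode
      have hterm : ∀ i : Fin m, (S i)ᵀ *ᵥ v (t + 1) i =
          (S i)ᵀ *ᵥ v t i - (if i ∈ A t then α • ((S i)ᵀ *ᵥ (S i *ᵥ hh)) else 0) := by
        intro i
        rw [hiter t i]
        by_cases hi : i ∈ A t <;>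
          simp [hi, Matrix.mulVec_sub, Matrix.mulVec_smul, hw, hhh]
      rw [Finset.sum_congr rfl fun i _ => hterm i, Finset.sum_sub_distrib,
        Fintype.sum_ite_mem, Finset.smul_sum]
    -- dot products with u
    have hdot : ∀ y : Fin p → ℝ, y ⬝ᵥ u = ∑ i ∈ A t, (S i *ᵥ y) ⬝ᵥ (S i *ᵥ hh) := by
      intro y
      rw [hu, dotProduct_finsum]
      exact Finset.sum_congr rfl fun i _ => by
        rw [Matrix.dotProduct_mulVec, Matrix.vecMul_transpose]
    have hhu : hh ⬝ᵥ u = encSq S (A t) hh := hdot hh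
    -- BRIP bounds
    have hB := hBRIP (A t) (hA t)
    have hQlow : (1 - ε) * (hh ⬝ᵥ hh) ≤ encSq S (A t) hh := (hB hh).1
    have hQnn : 0 ≤ encSq S (A t) hh :=
      Finset.sum_nonneg fun i _ => dotSelf_nonneg _
    -- ‖u‖² ≤ (1+ε) Q
    have huu : u ⬝ᵥ u ≤ (1 + ε) * encSq S (A t) hh := by
      have hcs : (u ⬝ᵥ u) ^ 2 ≤ encSq S (A t) u * encSq S (A t) hh := by
        have h := cs_blocks S (A t) u hh
        rwa [← hdot u] at h
      have hup : encSq S (A t) u ≤ (1 + ε) * (u ⬝ᵥ u) := (hB u).2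
      have hUnn : 0 ≤ u ⬝ᵥ u := dotSelf_nonneg u
      rcases eq_or_lt_of_le hUnn with h0 | hpos
      · nlinarith
      · nlinarith
    -- smoothness step
    have hstep : g (w (t + 1)) ≤ g (w t) - α * encSq S (A t) hh
        + L / 2 * (α ^ 2 * (u ⬝ᵥ u)) := by
      have hs := hsmooth (w t) (w (t + 1))
      have hba : w (t + 1) - w t = (-α) • u := by
        rw [hw1, sub_sub_cancel_left, neg_smul]
      rw [hba, dotProduct_smul, smul_dotProduct, dotProduct_smul,
        smul_eq_mul, smul_eq_mul, smul_eq_mul, ← hhh, hhu] at hs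
      have he : (-α) * ((-α) * (u ⬝ᵥ u)) = α ^ 2 * (u ⬝ᵥ u) := by ring
      rw [he] at hs
      linarith
    have hg1 : ν * (g (w t) - g wmin) ≤ hh ⬝ᵥ hh := by
      have := hgrad (w t); rwa [← hhh] at this
    have hgt : 0 ≤ g (w t) - g wmin := by have := hwmin (w t); linarith
    -- combine
    have hstep' : g (w (t + 1)) - g wmin ≤ (g (w t) - g wmin)
        - α * encSq S (A t) hh + L / 2 * (α ^ 2 * (u ⬝ᵥ u)) := by
      linarith only [hstep]
    rw [hc]
    exact step_combine hL hα0 hε0 hε1 hν hαL hstep' huu hQlow hg1 hgt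
  -- conclude
  rcases le_or_gt 0 c with hc0 | hc0
  · intro t
    induction t with
    | zero => simp
    | succ t ih =>
      calc g (w (t + 1)) - g wmin ≤ c * (g (w t) - g wmin) := key t
        _ ≤ c * (c ^ t * (g (w 0) - g wmin)) := mul_le_mul_of_nonneg_left ih hc0
        _ = c ^ (t + 1) * (g (w 0) - g wmin) := by ring
  · -- c < 0 forces ν > L, hence g is globally constant
    have hνL : L < ν := by
      refine nu_gt_L hL hα0 hε0 hν hαL hLα ?_
      rw [hc] at hc0; linarith only [hc0]
    have hconst : ∀ x : Fin p → ℝ, g x = g wmin := by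
      intro x
      set a : Fin p → ℝ := proj x with ha
      set d : Fin p → ℝ := x - a with hd
      have hga : g' a ⬝ᵥ g' a ≤ 0 := by
        have hs := hsmooth a (a - α • g' a)
        have hm : g a ≤ g (a - α • g' a) := by
          have h1 := hproj_mem x (a - α • g' a)
          rw [← ha] at h1; exact h1
        have hba : a - α • g' a - a = (-α) • g' a := by
          rw [sub_sub_cancel_left, neg_smul]
        rw [hba] at hs
        simp only [dotProduct_smul, smul_dotProduct, smul_eq_mul] at hs
        refine descent_G_nonpos (L := L) hα0 hLα ?_ hm
        linarith only [hs]
      have hgad : ∀ y : Fin p → ℝ, g' a ⬝ᵥ y = 0 := fun y => dot_eq_zero_left hga y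
      have hcoco : g' x ⬝ᵥ d ≤ L * (d ⬝ᵥ d) := by
        have h1 := hsmooth x a
        have h2 := hsmooth a x
        have e1 : a - x = -d := by rw [hd, neg_sub]
        rw [e1, dotProduct_neg] at h1
        rw [show x - a = d from hd.symm, hgad d] at h2
        have e2 : (-d) ⬝ᵥ (-d) = d ⬝ᵥ d := by
          rw [neg_dotProduct, dotProduct_neg, neg_neg]
        rw [e2] at h1
        linarith
      have hrx : ν * (d ⬝ᵥ d) ≤ g' x ⬝ᵥ d := by
        have := hrsc x; rwa [← ha, ← hd] at this
      have hD0 : d ⬝ᵥ d ≤ 0 := by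
        by_contra hDp
        push_neg at hDp
        have := mul_lt_mul_of_pos_right hνL hDp
        linarith only [this, hrx, hcoco]
      have hxd : g' x ⬝ᵥ d = 0 := by
        rw [dotProduct_comm]
        exact dot_eq_zero_left hD0 (g' x)
      have hcv := hconv x a
      have e1 : a - x = -d := by rw [hd, neg_sub]
      rw [e1, dotProduct_neg, hxd, neg_zero] at hcv
      have h1 : g a ≤ g wmin := by
        have := hproj_mem x wmin; rwa [← ha] at this
      have h2 := hwmin x
      linarith
    intro t
    rw [show g (w t) = g wmin from hconst (w t),
      show g (w 0) = g wmin from hconst (w 0)]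
    simp

end Stmt7
end
end

section
/- Let A ⊆ {1,…,m} with |A| ≥ ηm, and suppose S satisfies the BRIP condition with parameters (η, ε). Let v ∈ ℝ^{βp}, α > 0, and define Δ ∈ ℝ^{βp} blockwise by Δ_i = −α ∇_{v_i} g̃(v) = −α S_i ∇g(S^⊤v) for i ∈ A and Δ_i = 0 for i ∉ A. Then: (a) g̃(v + Δ) − g̃(v) ≤ −(1/α − L(1+ε)/2) ‖Δ‖²; and (b) ‖Δ‖² ≥ (1−ε) α² ‖∇g(S^⊤ v)‖². -/
open Matrix Finset

noncomputable section

namespace Stmt10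

/-- Decoding map: `w = Sᵀ v = ∑ᵢ Sᵢᵀ vᵢ`, where `v` is stored blockwise. -/
def decode {p r m : ℕ} (S : Fin m → Matrix (Fin r) (Fin p) ℝ)
    (v : Fin m → Fin r → ℝ) : Fin p → ℝ :=
  ∑ i, (S i)ᵀ *ᵥ v i

/-- `‖S_A z‖² = ∑_{i ∈ A} ‖S_i z‖²`, the quadratic form of `S_Aᵀ S_A`. -/
def encSq {p r m : ℕ} (S : Fin m → Matrix (Fin r) (Fin p) ℝ) (A : Finset (Fin m))
    (z : Fin p → ℝ) : ℝ :=
  ∑ i ∈ A, (S i *ᵥ z) ⬝ᵥ (S i *ᵥ z)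

lemma encSq_cs {p r m : ℕ} (S : Fin m → Matrix (Fin r) (Fin p) ℝ) (A : Finset (Fin m))
    (x y : Fin p → ℝ) :
    (∑ i ∈ A, (S i *ᵥ x) ⬝ᵥ (S i *ᵥ y)) ^ 2 ≤ encSq S A x * encSq S A y := by
  have h := Finset.sum_mul_sq_le_sq_mul_sq (A ×ˢ (Finset.univ : Finset (Fin r)))
    (fun q => (S q.1 *ᵥ x) q.2) (fun q => (S q.1 *ᵥ y) q.2)
  simpa [encSq, Finset.sum_product, dotProduct, pow_two] using h

lemma dot_self_nonneg {n : ℕ} (x : Fin n → ℝ) : 0 ≤ x ⬝ᵥ x :=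
  Finset.sum_nonneg fun i _ => mul_self_nonneg _

lemma encSq_nonneg {p r m : ℕ} (S : Fin m → Matrix (Fin r) (Fin p) ℝ) (A : Finset (Fin m))
    (z : Fin p → ℝ) : 0 ≤ encSq S A z :=
  Finset.sum_nonneg fun i _ => dot_self_nonneg _

/-- key step estimates of an encoded block coordinate descent
step.  With `Δᵢ = −α Sᵢ ∇g(Sᵀv)` for `i ∈ A` and `Δᵢ = 0` otherwise:
(a) `g̃(v+Δ) − g̃(v) ≤ −(1/α − L(1+ε)/2)‖Δ‖²`, and
(b) `‖Δ‖² ≥ (1−ε)α²‖∇g(Sᵀv)‖²`. -/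
theorem encoded_bcd_step_bounds
    {p r m : ℕ}
    (S : Fin m → Matrix (Fin r) (Fin p) ℝ)
    (g : (Fin p → ℝ) → ℝ) (g' : (Fin p → ℝ) → (Fin p → ℝ))
    (η ε L α : ℝ)
    (A : Finset (Fin m)) (v Δ : Fin m → Fin r → ℝ)
    -- BRIP parameters
    (hη0 : 0 < η) (hη1 : η ≤ 1) (hε0 : 0 < ε) (hε1 : ε < 1)
    -- BRIP condition
    (hBRIP : ∀ B : Finset (Fin m), η * m ≤ (B.card : ℝ) →
      ∀ z : Fin p → ℝ,
        (1 - ε) * (z ⬝ᵥ z) ≤ encSq S B z ∧ encSq S B z ≤ (1 + ε) * (z ⬝ᵥ z))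
    (hA : η * m ≤ ((A.card : ℕ) : ℝ))
    -- g is convex and differentiable with gradient g'
    (hconv : ∀ a b : Fin p → ℝ, g a + g' a ⬝ᵥ (b - a) ≤ g b)
    -- g is L-smooth
    (hsmooth : ∀ a b : Fin p → ℝ,
      g b ≤ g a + g' a ⬝ᵥ (b - a) + L / 2 * ((b - a) ⬝ᵥ (b - a)))
    (hα0 : 0 < α)
    -- blockwise definition of Δ
    (hΔ : ∀ i : Fin m,
      Δ i = if i ∈ A then -(α • (S i *ᵥ g' (decode S v))) else 0) :
    g (decode S (fun i => v i + Δ i)) - g (decode S v) ≤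
        -(1 / α - L * (1 + ε) / 2) * (∑ i, Δ i ⬝ᵥ Δ i) ∧
      (1 - ε) * α ^ 2 * (g' (decode S v) ⬝ᵥ g' (decode S v)) ≤
        ∑ i, Δ i ⬝ᵥ Δ i := by
  classical
  set w := decode S v with hw
  set d := g' w with hd
  set E := encSq S A d with hE
  have hΔA : ∀ i ∈ A, Δ i = -(α • (S i *ᵥ d)) := fun i hi => by rw [hΔ i, if_pos hi]
  have hΔA' : ∀ i ∉ A, Δ i = 0 := fun i hi => by rw [hΔ i, if_neg hi]
  -- sum of squares of Δ
  have hsum : ∑ i, Δ i ⬝ᵥ Δ i = α ^ 2 * E := by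
    rw [← Finset.sum_subset (Finset.subset_univ A)
      (fun i _ hi => by rw [hΔA' i hi]; simp)]
    rw [hE]; unfold encSq
    rw [Finset.mul_sum]
    refine Finset.sum_congr rfl fun i hi => ?_
    rw [hΔA i hi]
    simp only [neg_dotProduct, dotProduct_neg, neg_neg,
      smul_dotProduct, dotProduct_smul, smul_eq_mul]
    ring
  have hB := hBRIP A hA d
  have hE0 : 0 ≤ E := encSq_nonneg S A d
  have hdd0 : 0 ≤ d ⬝ᵥ d := dot_self_nonneg d
  -- part (b)
  have hb : (1 - ε) * α ^ 2 * (d ⬝ᵥ d) ≤ ∑ i, Δ i ⬝ᵥ Δ i := by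
    rw [hsum]
    nlinarith [mul_le_mul_of_nonneg_left hB.1 (sq_nonneg α)]
  refine ⟨?_, hb⟩
  -- part (a)
  set Md : Fin p → ℝ := ∑ i ∈ A, (S i)ᵀ *ᵥ (S i *ᵥ d) with hMd
  have hyB : ∀ x : Fin p → ℝ, x ⬝ᵥ Md = ∑ i ∈ A, (S i *ᵥ x) ⬝ᵥ (S i *ᵥ d) := by
    intro x
    rw [hMd]
    simp only [dotProduct, Finset.sum_apply, Finset.mul_sum]
    rw [Finset.sum_comm]
    refine Finset.sum_congr rfl fun i _ => ?_
    have : x ⬝ᵥ ((S i)ᵀ *ᵥ (S i *ᵥ d)) = (S i *ᵥ x) ⬝ᵥ (S i *ᵥ d) := by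
      rw [Matrix.dotProduct_mulVec, Matrix.vecMul_transpose]
    simpa [dotProduct] using this
  have hdMd : d ⬝ᵥ Md = E := by rw [hyB d]; rfl
  have hMM0 : 0 ≤ Md ⬝ᵥ Md := dot_self_nonneg Md
  -- ‖Md‖² ≤ (1+ε) E
  have hMdMd : Md ⬝ᵥ Md ≤ (1 + ε) * E := by
    have h1 : Md ⬝ᵥ Md = ∑ i ∈ A, (S i *ᵥ Md) ⬝ᵥ (S i *ᵥ d) := hyB Md
    have h2 := encSq_cs S A Md d
    have h3 := (hBRIP A hA Md).2
    rcases eq_or_lt_of_le hMM0 with h0 | h0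
    · nlinarith
    · rw [h1] at h0 ⊢
      nlinarith
  -- decode of Δ
  have hdecΔ : decode S Δ = -(α • Md) := by
    unfold decode
    have hterm : ∀ i : Fin m, (S i)ᵀ *ᵥ Δ i =
        if i ∈ A then -(α • ((S i)ᵀ *ᵥ (S i *ᵥ d))) else 0 := by
      intro i
      rw [hΔ i]
      split
      · rw [Matrix.mulVec_neg, Matrix.mulVec_smul]
      · simp
    simp_rw [hterm]
    rw [Finset.sum_ite, Finset.sum_const_zero, add_zero, Finset.filter_mem_eq_inter,
      Finset.univ_inter, Finset.sum_neg_distrib, hMd, Finset.smul_sum]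
  have hdec : decode S (fun i => v i + Δ i) = w + decode S Δ := by
    rw [hw]; unfold decode
    rw [← Finset.sum_add_distrib]
    exact Finset.sum_congr rfl fun i _ => by rw [Matrix.mulVec_add]
  set u := decode S Δ with hu
  have huu : u ⬝ᵥ u = α ^ 2 * (Md ⬝ᵥ Md) := by
    rw [hdecΔ]
    simp only [neg_dotProduct, dotProduct_neg, neg_neg,
      smul_dotProduct, dotProduct_smul, smul_eq_mul]
    ring
  have hdu : d ⬝ᵥ u = -(α * E) := by
    rw [hdecΔ]
    simp only [dotProduct_neg, dotProduct_smul, smul_eq_mul, hdMd]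
  -- L nonnegativity on quadratic forms
  have hLz : ∀ z : Fin p → ℝ, 0 ≤ L / 2 * (z ⬝ᵥ z) := by
    intro z
    have h1 := hconv w (w + z)
    have h2 := hsmooth w (w + z)
    have hz : w + z - w = z := by abel
    rw [hz] at h1 h2
    linarith
  have hLu := hLz u
  have hLd := hLz d
  -- smoothness at the step
  have hs := hsmooth w (w + u)
  have hz : w + u - w = u := by abel
  rw [hz] at hs
  rw [hdec, hsum, hd] at *
  have hrw : -(1 / α - L * (1 + ε) / 2) * (α ^ 2 * E) =
      -(α * E) + L / 2 * ((1 + ε) * (α ^ 2 * E)) := by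
    field_simp
    ring
  rw [hrw]
  have key : g (w + u) - g w ≤ -(α * E) + L / 2 * (α ^ 2 * (Md ⬝ᵥ Md)) := by
    rw [← huu, ← hdu]; linarith
  rcases le_or_gt 0 L with hL | hL
  · have : L / 2 * (α ^ 2 * (Md ⬝ᵥ Md)) ≤ L / 2 * ((1 + ε) * (α ^ 2 * E)) := by
      apply mul_le_mul_of_nonneg_left _ (by linarith)
      nlinarith [sq_nonneg α]
    linarith
  · have hdd : d ⬝ᵥ d = 0 := by
      by_contra h
      have hlt : 0 < d ⬝ᵥ d := lt_of_le_of_ne hdd0 (Ne.symm h)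
      have := mul_pos (neg_pos.mpr hL) hlt
      nlinarith
    have hB2 := hB.2
    rw [hdd, mul_zero] at hB2
    have hEz : E = 0 := le_antisymm hB2 hE0
    have hMz : Md ⬝ᵥ Md = 0 := by
      have h := hMdMd
      rw [hEz, mul_zero] at h
      exact le_antisymm h hMM0
    rw [hEz, hMz] at key
    rw [hEz]
    simp only [mul_zero, neg_zero, zero_add] at key ⊢
    linarith
end Stmt10
end
end

section
/- Let X ∈ ℝ^{n×p}, y ∈ ℝ^n, let C ⊆ ℝ^p be a convex set, and let T ∈ ℝ^{q×n} be a matrix satisfying (1−ε)I_n ⪯ T^⊤T ⪯ (1+ε)I_n for some 0 < ε < 1. Let ŵ ∈ argmin_{w ∈ C} ‖T(Xw − y)‖² and w* ∈ argmin_{w ∈ C} ‖Xw − y‖² (both assumed to exist). Then ‖Xŵ − y‖² ≤ κ² ‖Xw* − y‖², where κ = (1+ε)/(1−ε). -/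
open Matrix

noncomputable section

namespace Stmt11

/-- Lemma 2: solution ball.  If `(1−ε)I ⪯ TᵀT ⪯ (1+ε)I`,
then the constrained encoded least-squares solution `ŵ` satisfies
`‖Xŵ − y‖² ≤ κ²‖Xw* − y‖²` with `κ = (1+ε)/(1−ε)`. -/
theorem encoded_solution_ball
    {n p q : ℕ}
    (X : Matrix (Fin n) (Fin p) ℝ) (y : Fin n → ℝ)
    (T : Matrix (Fin q) (Fin n) ℝ)
    (C : Set (Fin p → ℝ)) (ε : ℝ)
    (what wstar : Fin p → ℝ)
    (hε0 : 0 < ε) (hε1 : ε < 1)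
    (hC : Convex ℝ C)
    -- (1−ε)I ⪯ TᵀT ⪯ (1+ε)I
    (hTlow : ∀ z : Fin n → ℝ, (1 - ε) * (z ⬝ᵥ z) ≤ (T *ᵥ z) ⬝ᵥ (T *ᵥ z))
    (hTup : ∀ z : Fin n → ℝ, (T *ᵥ z) ⬝ᵥ (T *ᵥ z) ≤ (1 + ε) * (z ⬝ᵥ z))
    -- ŵ ∈ argmin_{w ∈ C} ‖T(Xw − y)‖²
    (hwhat_mem : what ∈ C)
    (hwhat : ∀ w ∈ C,
      (T *ᵥ (X *ᵥ what - y)) ⬝ᵥ (T *ᵥ (X *ᵥ what - y)) ≤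
        (T *ᵥ (X *ᵥ w - y)) ⬝ᵥ (T *ᵥ (X *ᵥ w - y)))
    -- w* ∈ argmin_{w ∈ C} ‖Xw − y‖²
    (hwstar_mem : wstar ∈ C)
    (hwstar : ∀ w ∈ C,
      (X *ᵥ wstar - y) ⬝ᵥ (X *ᵥ wstar - y) ≤ (X *ᵥ w - y) ⬝ᵥ (X *ᵥ w - y)) :
    (X *ᵥ what - y) ⬝ᵥ (X *ᵥ what - y) ≤
      ((1 + ε) / (1 - ε)) ^ 2 * ((X *ᵥ wstar - y) ⬝ᵥ (X *ᵥ wstar - y)) := by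
  set a := X *ᵥ what - y with ha
  set b := X *ᵥ wstar - y with hb'
  have hb : (0:ℝ) ≤ b ⬝ᵥ b := by
    simpa [dotProduct] using Finset.sum_nonneg fun i _ => mul_self_nonneg (b i)
  have h1 : (1 - ε) * (a ⬝ᵥ a) ≤ (1 + ε) * (b ⬝ᵥ b) :=
    le_trans (hTlow a) (le_trans (hwhat wstar hwstar_mem) (hTup b))
  have hpos : (0:ℝ) < 1 - ε := by linarith
  have h2 : a ⬝ᵥ a ≤ ((1 + ε) / (1 - ε)) * (b ⬝ᵥ b) := by
    rw [div_mul_eq_mul_div, le_div_iff₀ hpos]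
    linarith [h1]
  have hκ : (1:ℝ) ≤ (1 + ε) / (1 - ε) := by
    rw [le_div_iff₀ hpos]; linarith
  have hκ0 : (0:ℝ) ≤ (1 + ε) / (1 - ε) := le_trans zero_le_one hκ
  have h3 := mul_le_mul_of_nonneg_right hκ (mul_nonneg hκ0 hb)
  nlinarith [h2, h3]

end Stmt11
end
end

section
/- Let X ∈ ℝ^{n×p}, y ∈ ℝ^n, let h : ℝ^p → ℝ be convex and nonnegative, let λ ≥ 0, and let T ∈ ℝ^{q×n} be a matrix satisfying (1−ε)I_n ⪯ T^⊤T ⪯ (1+ε)I_n for some 0 < ε < 1. Define f(w) = ‖Xw − y‖² + λh(w), and let ŵ ∈ argmin_w { ‖T(Xw − y)‖² + λh(w) } and w* ∈ argmin_w f(w) (both assumed to exist, along with the constrained minimizers argmin_{λh(w)≤r} ‖T(Xw−y)‖² and argmin_{λh(w)≤r} ‖Xw−y‖² for every r ≥ 0). Then f(ŵ) ≤ κ² f(w*), where κ = (1+ε)/(1−ε). -/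
open Matrix

noncomputable section

namespace Stmt12

/-- Lemma 3: regularized solution ball.  If
`(1−ε)I ⪯ TᵀT ⪯ (1+ε)I`, then the minimizer `ŵ` of the encoded regularized
objective satisfies `f(ŵ) ≤ κ² f(w*)` with `κ = (1+ε)/(1−ε)`,
where `f(w) = ‖Xw − y‖² + λh(w)`. -/
theorem encoded_regularized_solution_ball
    {n p q : ℕ}
    (X : Matrix (Fin n) (Fin p) ℝ) (y : Fin n → ℝ)
    (T : Matrix (Fin q) (Fin n) ℝ)
    (h : (Fin p → ℝ) → ℝ) (lam ε : ℝ)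
    (what wstar : Fin p → ℝ)
    (hε0 : 0 < ε) (hε1 : ε < 1)
    -- h is convex and nonnegative, λ ≥ 0
    (hconv : ConvexOn ℝ Set.univ h) (hh : ∀ v, 0 ≤ h v) (hlam : 0 ≤ lam)
    -- (1−ε)I ⪯ TᵀT ⪯ (1+ε)I
    (hTlow : ∀ z : Fin n → ℝ, (1 - ε) * (z ⬝ᵥ z) ≤ (T *ᵥ z) ⬝ᵥ (T *ᵥ z))
    (hTup : ∀ z : Fin n → ℝ, (T *ᵥ z) ⬝ᵥ (T *ᵥ z) ≤ (1 + ε) * (z ⬝ᵥ z))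
    -- ŵ ∈ argmin ‖T(Xw − y)‖² + λh(w)
    (hwhat : ∀ w : Fin p → ℝ,
      (T *ᵥ (X *ᵥ what - y)) ⬝ᵥ (T *ᵥ (X *ᵥ what - y)) + lam * h what ≤
        (T *ᵥ (X *ᵥ w - y)) ⬝ᵥ (T *ᵥ (X *ᵥ w - y)) + lam * h w)
    -- w* ∈ argmin f
    (hwstar : ∀ w : Fin p → ℝ,
      (X *ᵥ wstar - y) ⬝ᵥ (X *ᵥ wstar - y) + lam * h wstar ≤
        (X *ᵥ w - y) ⬝ᵥ (X *ᵥ w - y) + lam * h w)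
    -- for every r ≥ 0, the constrained minimizers over {λh(w) ≤ r} exist
    (hexists_enc : ∀ rr : ℝ, 0 ≤ rr → ∃ wr : Fin p → ℝ, lam * h wr ≤ rr ∧
      ∀ w : Fin p → ℝ, lam * h w ≤ rr →
        (T *ᵥ (X *ᵥ wr - y)) ⬝ᵥ (T *ᵥ (X *ᵥ wr - y)) ≤
          (T *ᵥ (X *ᵥ w - y)) ⬝ᵥ (T *ᵥ (X *ᵥ w - y)))
    (hexists_unc : ∀ rr : ℝ, 0 ≤ rr → ∃ ur : Fin p → ℝ, lam * h ur ≤ rr ∧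
      ∀ w : Fin p → ℝ, lam * h w ≤ rr →
        (X *ᵥ ur - y) ⬝ᵥ (X *ᵥ ur - y) ≤ (X *ᵥ w - y) ⬝ᵥ (X *ᵥ w - y)) :
    (X *ᵥ what - y) ⬝ᵥ (X *ᵥ what - y) + lam * h what ≤
      ((1 + ε) / (1 - ε)) ^ 2 *
        ((X *ᵥ wstar - y) ⬝ᵥ (X *ᵥ wstar - y) + lam * h wstar) := by
  set A := (X *ᵥ what - y) ⬝ᵥ (X *ᵥ what - y) with hAdef
  set B := (T *ᵥ (X *ᵥ what - y)) ⬝ᵥ (T *ᵥ (X *ᵥ what - y)) with hBdef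
  set C := (X *ᵥ wstar - y) ⬝ᵥ (X *ᵥ wstar - y) with hCdef
  set D := (T *ᵥ (X *ᵥ wstar - y)) ⬝ᵥ (T *ᵥ (X *ᵥ wstar - y)) with hDdef
  have hA0 : 0 ≤ A := Finset.sum_nonneg fun i _ => mul_self_nonneg _
  have hC0 : 0 ≤ C := Finset.sum_nonneg fun i _ => mul_self_nonneg _
  have h1 : (1 - ε) * A ≤ B := hTlow _
  have h2 : D ≤ (1 + ε) * C := hTup _
  have h3 : B + lam * h what ≤ D + lam * h wstar := hwhat wstar
  have hha : 0 ≤ lam * h what := mul_nonneg hlam (hh _)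
  have hhc : 0 ≤ lam * h wstar := mul_nonneg hlam (hh _)
  have hεpos : (0:ℝ) < 1 - ε := by linarith
  have key : (1 - ε) * (A + lam * h what) ≤ (1 + ε) * (C + lam * h wstar) := by
    nlinarith [mul_nonneg hε0.le hha, mul_nonneg hε0.le hhc]
  have hstep : A + lam * h what ≤ ((1 + ε) / (1 - ε)) * (C + lam * h wstar) := by
    rw [div_mul_eq_mul_div, le_div_iff₀ hεpos]
    linarith [key]
  have hκ1 : (1:ℝ) ≤ (1 + ε) / (1 - ε) := by
    rw [le_div_iff₀ hεpos]; linarith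
  have hfC : 0 ≤ C + lam * h wstar := by linarith
  calc A + lam * h what ≤ ((1 + ε) / (1 - ε)) * (C + lam * h wstar) := hstep
    _ ≤ ((1 + ε) / (1 - ε)) ^ 2 * (C + lam * h wstar) := by
        apply mul_le_mul_of_nonneg_right _ hfC
        nlinarith [hκ1]

end Stmt12
end
end

section
/- Suppose S satisfies the BRIP condition with parameters (η, ε), let {A_t}_{t≥0} be a sequence of subsets of {1,…,m} with |A_t| ≥ ηm, and for each t let w̃*_t ∈ argmin_w f̃^{A_t}(w) (assumed to exist, along with the auxiliary minimizers needed so that f(w̃*_t) ≤ κ² f(w*)). Suppose a sequence {w_t} satisfies f̃^{A_t}(w_{t+1}) − f̃^{A_t}(w̃*_t) ≤ γ (f̃^{A_t}(w_t) − f̃^{A_t}(w̃*_t)) for all t, for some 0 < γ < 1, where κ = (1+ε)/(1−ε) satisfies κγ < 1. Then for all t ≥ 1, f(w_t) ≤ (κγ)^t f(w_0) + (κ²(κ−γ)/(1−κγ)) f(w*). -/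
/-!
Sandwiching the encoded objective between `(1 - ε) f` and `(1 + ε) f` turns the geometric decrease
of `f̃^{A_t}` towards its minimum `f̃^{A_t}(w̃*_t) ≤ f̃^{A_t}(w*)` into the one-step recursion
`f(w_{t+1}) ≤ κγ f(w_t) + κ(1 - γ) f(w*)`; unrolling it with `κγ < 1` gives the bound with constant
`κ(1 - γ)/(1 - κγ)`, which is at most `κ²(κ - γ)/(1 - κγ)` because `κ ≥ 1`.
-/

open Matrix Finset

noncomputable section

namespace Stmt13

/-- The original objective `f(w) = ‖Xw − y‖² + λ h(w)`. -/
def objF {n p : ℕ} (X : Matrix (Fin n) (Fin p) ℝ) (y : Fin n → ℝ) (lam : ℝ)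
    (h : (Fin p → ℝ) → ℝ) (w : Fin p → ℝ) : ℝ :=
  (X *ᵥ w - y) ⬝ᵥ (X *ᵥ w - y) + lam * h w

/-- `‖S_A z‖² = ∑_{i ∈ A} ‖S_i z‖²`, the quadratic form of `S_Aᵀ S_A`. -/
def encSq {n r m : ℕ} (S : Fin m → Matrix (Fin r) (Fin n) ℝ) (A : Finset (Fin m))
    (z : Fin n → ℝ) : ℝ :=
  ∑ i ∈ A, (S i *ᵥ z) ⬝ᵥ (S i *ᵥ z)

/-- The encoded objective `f̃^A(w) = ‖S_A(Xw − y)‖² + λ h(w)`. -/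
def objTilde {n p r m : ℕ} (X : Matrix (Fin n) (Fin p) ℝ) (y : Fin n → ℝ)
    (S : Fin m → Matrix (Fin r) (Fin n) ℝ) (lam : ℝ) (h : (Fin p → ℝ) → ℝ)
    (A : Finset (Fin m)) (w : Fin p → ℝ) : ℝ :=
  encSq S A (X *ᵥ w - y) + lam * h w

theorem le_pow_mul_add_div_one_sub {a : ℕ → ℝ} {q b : ℝ} (hq0 : 0 ≤ q) (hq1 : q < 1) (hb : 0 ≤ b)
    (hstep : ∀ t, a (t + 1) ≤ q * a t + b) (t : ℕ) :
    a t ≤ q ^ t * a 0 + b / (1 - q) := by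
  have hfix : q * (b / (1 - q)) + b = b / (1 - q) := by
    field_simp [(sub_pos.2 hq1).ne']
    ring
  induction t with
  | zero => simpa using div_nonneg hb (sub_pos.2 hq1).le
  | succ t ih =>
    calc a (t + 1) ≤ q * a t + b := hstep t
      _ ≤ q * (q ^ t * a 0 + b / (1 - q)) + b := by gcongr
      _ = q ^ (t + 1) * a 0 + b / (1 - q) := by
        rw [pow_succ]; linear_combination hfix

theorem mul_one_sub_le_sq_mul_sub {κ γ : ℝ} (hκ : 1 ≤ κ) (hγ : γ ≤ 1) :
    κ * (1 - γ) ≤ κ ^ 2 * (κ - γ) := by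
  have hfactor : 0 ≤ κ * ((κ - 1) * (κ + 1 - γ)) :=
    mul_nonneg (by linarith) (mul_nonneg (by linarith) (by linarith))
  nlinarith

section Objectives

variable {n p r m : ℕ} (X : Matrix (Fin n) (Fin p) ℝ) (y : Fin n → ℝ)
  (S : Fin m → Matrix (Fin r) (Fin n) ℝ) {lam : ℝ} {h : (Fin p → ℝ) → ℝ}

theorem objF_nonneg (hlam : 0 ≤ lam) (hh : ∀ v, 0 ≤ h v) (w : Fin p → ℝ) :
    0 ≤ objF X y lam h w :=
  add_nonneg (Finset.sum_nonneg fun _ _ => mul_self_nonneg _) (mul_nonneg hlam (hh w))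

variable {ε : ℝ} {A : Finset (Fin m)} {w : Fin p → ℝ}

theorem one_sub_mul_objF_le_objTilde (hε : 0 ≤ ε) (hreg : 0 ≤ lam * h w)
    (hlow : (1 - ε) * ((X *ᵥ w - y) ⬝ᵥ (X *ᵥ w - y)) ≤ encSq S A (X *ᵥ w - y)) :
    (1 - ε) * objF X y lam h w ≤ objTilde X y S lam h A w := by
  unfold objF objTilde
  nlinarith

theorem objTilde_le_one_add_mul_objF (hε : 0 ≤ ε) (hreg : 0 ≤ lam * h w)
    (hup : encSq S A (X *ᵥ w - y) ≤ (1 + ε) * ((X *ᵥ w - y) ⬝ᵥ (X *ᵥ w - y))) :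
    objTilde X y S lam h A w ≤ (1 + ε) * objF X y lam h w := by
  unfold objF objTilde
  nlinarith

theorem objF_le_of_encoded_descent {γ : ℝ} {v w' : Fin p → ℝ} (u : Fin p → ℝ)
    (hε0 : 0 ≤ ε) (hε1 : ε < 1) (hγ0 : 0 ≤ γ) (hγ1 : γ ≤ 1) (hlam : 0 ≤ lam) (hh : ∀ v, 0 ≤ h v)
    (hBRIP : ∀ z : Fin n → ℝ,
      (1 - ε) * (z ⬝ᵥ z) ≤ encSq S A z ∧ encSq S A z ≤ (1 + ε) * (z ⬝ᵥ z))
    (hopt : ∀ u, objTilde X y S lam h A v ≤ objTilde X y S lam h A u)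
    (hdec : objTilde X y S lam h A w' - objTilde X y S lam h A v ≤
      γ * (objTilde X y S lam h A w - objTilde X y S lam h A v)) :
    objF X y lam h w' ≤
      (1 + ε) / (1 - ε) * γ * objF X y lam h w +
        (1 + ε) / (1 - ε) * (1 - γ) * objF X y lam h u := by
  have hreg : ∀ v, 0 ≤ lam * h v := fun v => mul_nonneg hlam (hh v)
  have hlow := one_sub_mul_objF_le_objTilde X y S hε0 (hreg w') (hBRIP _).1
  have hcur := objTilde_le_one_add_mul_objF X y S (A := A) hε0 (hreg w) (hBRIP _).2
  have hcmp := objTilde_le_one_add_mul_objF X y S (A := A) hε0 (hreg u) (hBRIP _).2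
  have key : (1 - ε) * objF X y lam h w' ≤
      γ * ((1 + ε) * objF X y lam h w) + (1 - γ) * ((1 + ε) * objF X y lam h u) := by
    have hγw := mul_le_mul_of_nonneg_left hcur hγ0
    have hγu := mul_le_mul_of_nonneg_left ((hopt u).trans hcmp) (sub_nonneg.2 hγ1)
    linarith
  rw [mul_assoc, mul_assoc, ← mul_add, div_mul_eq_mul_div, le_div_iff₀ (by linarith)]
  linarith

end Objectives

theorem encoded_descent_to_original_convergence_general
    {n p r m : ℕ}
    (X : Matrix (Fin n) (Fin p) ℝ) (y : Fin n → ℝ)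
    (S : Fin m → Matrix (Fin r) (Fin n) ℝ)
    (η ε lam γ κ : ℝ)
    (h : (Fin p → ℝ) → ℝ)
    (A : ℕ → Finset (Fin m)) (w : ℕ → Fin p → ℝ)
    (wt : ℕ → Fin p → ℝ) (wstar : Fin p → ℝ)
    -- BRIP parameters
    (hε0 : 0 < ε) (hε1 : ε < 1)
    -- BRIP condition
    (hBRIP : ∀ B : Finset (Fin m), η * m ≤ (B.card : ℝ) →
      ∀ z : Fin n → ℝ,
        (1 - ε) * (z ⬝ᵥ z) ≤ encSq S B z ∧ encSq S B z ≤ (1 + ε) * (z ⬝ᵥ z))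
    (hA : ∀ t, η * m ≤ (((A t).card : ℕ) : ℝ))
    -- h is convex and nonnegative, λ ≥ 0
    (hh : ∀ v, 0 ≤ h v) (hlam : 0 ≤ lam)
    -- w̃*_t is a minimizer of f̃^{A_t}
    (hopt : ∀ t, ∀ u : Fin p → ℝ,
      objTilde X y S lam h (A t) (wt t) ≤ objTilde X y S lam h (A t) u)
    -- geometric per-iteration decrease on each instantaneous problem
    (hγ0 : 0 < γ) (hγ1 : γ < 1)
    (hdec : ∀ t,
      objTilde X y S lam h (A t) (w (t + 1)) - objTilde X y S lam h (A t) (wt t) ≤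
        γ * (objTilde X y S lam h (A t) (w t) - objTilde X y S lam h (A t) (wt t)))
    -- κ = (1+ε)/(1−ε) with κγ < 1
    (hκ : κ = (1 + ε) / (1 - ε)) (hκγ : κ * γ < 1) :
    ∀ t : ℕ, 1 ≤ t →
      objF X y lam h (w t) ≤
        (κ * γ) ^ t * objF X y lam h (w 0) +
          (κ ^ 2 * (κ - γ) / (1 - κ * γ)) * objF X y lam h wstar := by
  intro t _
  have hκ1 : 1 ≤ κ := by
    rw [hκ, le_div_iff₀ (by linarith)]
    linarith
  have hstep : ∀ t, objF X y lam h (w (t + 1)) ≤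
      κ * γ * objF X y lam h (w t) + κ * (1 - γ) * objF X y lam h wstar := fun t => by
    rw [hκ]
    exact objF_le_of_encoded_descent X y S wstar hε0.le hε1 hγ0.le hγ1.le hlam hh
      (hBRIP (A t) (hA t)) (hopt t) (hdec t)
  have hFstar := objF_nonneg X y hlam hh wstar
  have hb : 0 ≤ κ * (1 - γ) * objF X y lam h wstar :=
    mul_nonneg (mul_nonneg (by linarith) (by linarith)) hFstar
  have hconst : κ * (1 - γ) / (1 - κ * γ) ≤ κ ^ 2 * (κ - γ) / (1 - κ * γ) :=
    div_le_div_of_nonneg_right (mul_one_sub_le_sq_mul_sub hκ1 hγ1.le) (by linarith)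
  calc objF X y lam h (w t)
      ≤ (κ * γ) ^ t * objF X y lam h (w 0) + κ * (1 - γ) * objF X y lam h wstar / (1 - κ * γ) :=
        le_pow_mul_add_div_one_sub (a := fun s => objF X y lam h (w s)) (by positivity) hκγ hb
          hstep t
    _ ≤ (κ * γ) ^ t * objF X y lam h (w 0) +
          (κ ^ 2 * (κ - γ) / (1 - κ * γ)) * objF X y lam h wstar := by
        rw [mul_div_right_comm]
        gcongr

/-- Lemma 4: from per-iteration geometric decrease on
the instantaneous encoded objectives to convergence of the original
objective. -/
theorem encoded_descent_to_original_convergence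
    {n p r m : ℕ}
    (X : Matrix (Fin n) (Fin p) ℝ) (y : Fin n → ℝ)
    (S : Fin m → Matrix (Fin r) (Fin n) ℝ)
    (η ε lam γ κ : ℝ)
    (h : (Fin p → ℝ) → ℝ)
    (A : ℕ → Finset (Fin m)) (w : ℕ → Fin p → ℝ)
    (wt : ℕ → Fin p → ℝ) (wstar : Fin p → ℝ)
    -- BRIP parameters
    (hη0 : 0 < η) (hη1 : η ≤ 1) (hε0 : 0 < ε) (hε1 : ε < 1)
    -- BRIP condition
    (hBRIP : ∀ B : Finset (Fin m), η * m ≤ (B.card : ℝ) →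
      ∀ z : Fin n → ℝ,
        (1 - ε) * (z ⬝ᵥ z) ≤ encSq S B z ∧ encSq S B z ≤ (1 + ε) * (z ⬝ᵥ z))
    (hA : ∀ t, η * m ≤ (((A t).card : ℕ) : ℝ))
    -- h is convex and nonnegative, λ ≥ 0
    (hconv : ConvexOn ℝ Set.univ h) (hh : ∀ v, 0 ≤ h v) (hlam : 0 ≤ lam)
    -- w̃*_t is a minimizer of f̃^{A_t}
    (hopt : ∀ t, ∀ u : Fin p → ℝ,
      objTilde X y S lam h (A t) (wt t) ≤ objTilde X y S lam h (A t) u)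
    -- w* is a minimizer of f
    (hwstar : ∀ u, objF X y lam h wstar ≤ objF X y lam h u)
    -- (via the auxiliary minimizers) f(w̃*_t) ≤ κ² f(w*)
    (hbound : ∀ t, objF X y lam h (wt t) ≤ κ ^ 2 * objF X y lam h wstar)
    -- geometric per-iteration decrease on each instantaneous problem
    (hγ0 : 0 < γ) (hγ1 : γ < 1)
    (hdec : ∀ t,
      objTilde X y S lam h (A t) (w (t + 1)) - objTilde X y S lam h (A t) (wt t) ≤
        γ * (objTilde X y S lam h (A t) (w t) - objTilde X y S lam h (A t) (wt t)))
    -- κ = (1+ε)/(1−ε) with κγ < 1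
    (hκ : κ = (1 + ε) / (1 - ε)) (hκγ : κ * γ < 1) :
    ∀ t : ℕ, 1 ≤ t →
      objF X y lam h (w t) ≤
        (κ * γ) ^ t * objF X y lam h (w 0) +
          (κ ^ 2 * (κ - γ) / (1 - κ * γ)) * objF X y lam h wstar :=
  encoded_descent_to_original_convergence_general X y S η ε lam γ κ h A w wt wstar hε0 hε1 hBRIP hA
    hh hlam hopt hγ0 hγ1 hdec hκ hκγ

end Stmt13
end
end
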